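/- arXiv:2303.06553 — 9 statements merged into one kernel-verified Lean document; each statement's English description precedes it below -/
import Mathlib

section
/- Let n ≥ 1 and let p : ZMod n → ℕ be a function with p(a) ≥ 1 and p(a) ≤ p(a+1) + 1 for all a (an admissible sequence). Define the Cartan matrix C over ℤ by C(a,b) = |{ i : 0 ≤ i < p(a), a + i = b in ZMod n }| and γ : ZMod n → ZMod n by γ(a) = a + p(a). If I ⊆ ZMod n is a cycle of γ (i.e., a finite orbit on which γ acts as a cyclic permutation), then n divides Σ_{a∈I} p(a), and for every b ∈ ZMod n, Σ_{a∈I} C(a,b) = (Σ_{a∈I} p(a)) / n. Equivalently, Cᵀ applied to the characteristic vector of I equals w·u where w = (Σ_{a∈I} p(a))/n and u is the all-ones vector. -/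
open Function Matrix Finset

/-- The Cartan matrix of the Nakayama algebra with admissible sequence `p`:
`C a b = #{0 ≤ i < p a : a + i = b}`. -/
def cartanMatrix (n : ℕ) (p : ZMod n → ℕ) : Matrix (ZMod n) (ZMod n) ℤ :=
  fun a b => ((Finset.range (p a)).filter (fun i : ℕ => (a + (i : ZMod n) = b))).card

/-- `I` is a cycle of the function `f`: the (finite) orbit of a periodic point. -/
def IsGammaCycle {α : Type*} [DecidableEq α] (f : α → α) (I : Finset α) : Prop :=
  ∃ a ∈ Function.periodicPts f,
    I = Finset.image (fun k => f^[k] a) (Finset.range (Function.minimalPeriod f a))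

/-- counting function -/
def cnt (n : ℕ) (b c : ZMod n) (t : ℕ) : ℕ :=
  ((Finset.range t).filter (fun i : ℕ => (c + (i : ZMod n) = b))).card

lemma cnt_add (n : ℕ) (b c : ZMod n) (t u : ℕ) :
    cnt n b c (t + u) = cnt n b c t + cnt n b (c + t) u := by
  induction u with
  | zero => simp [cnt]
  | succ u ih =>
    have h1 : t + (u+1) = (t+u) + 1 := by ring
    rw [h1]
    unfold cnt at *
    rw [Finset.range_add_one, Finset.filter_insert, Finset.range_add_one, Finset.filter_insert]
    have hc : (c + ((t + u : ℕ) : ZMod n) = b) ↔ ((c + (t:ℕ)) + (u : ℕ) = b) := by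
      push_cast; constructor <;> intro h <;> linear_combination h
    by_cases h : (c + ((t + u : ℕ) : ZMod n) = b)
    · rw [if_pos h, if_pos (hc.mp h), Finset.card_insert_of_notMem (by simp),
        Finset.card_insert_of_notMem (by simp)]
      omega
    · rw [if_neg h, if_neg (fun hh => h (hc.mpr hh)), ih]

lemma cnt_full (n : ℕ) [NeZero n] (b c : ZMod n) : cnt n b c n = 1 := by
  rw [cnt, Finset.card_eq_one]
  refine ⟨(b - c).val, ?_⟩
  ext i
  simp only [Finset.mem_filter, Finset.mem_range, Finset.mem_singleton]
  constructor
  · rintro ⟨hi, he⟩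
    have : (i : ZMod n) = b - c := by linear_combination he
    have := congrArg ZMod.val this
    rwa [ZMod.val_cast_of_lt hi] at this
  · rintro rfl
    refine ⟨ZMod.val_lt _, ?_⟩
    rw [ZMod.natCast_val, ZMod.cast_id]
    ring

lemma cnt_mul (n : ℕ) [NeZero n] (b c : ZMod n) (q : ℕ) : cnt n b c (q * n) = q := by
  induction q generalizing c with
  | zero => simp [cnt]
  | succ q ih =>
    have : (q+1) * n = q * n + n := by ring
    rw [this, cnt_add, ih, cnt_full]

/-- column sums of the Cartan matrix over a cycle. -/
theorem cycle_weighting (n : ℕ) [NeZero n] (p : ZMod n → ℕ)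
    (hp1 : ∀ a, 1 ≤ p a) (hp2 : ∀ a, p a ≤ p (a + 1) + 1)
    (I : Finset (ZMod n)) (hI : IsGammaCycle (fun a => a + (p a : ZMod n)) I) :
    n ∣ (∑ a ∈ I, p a) ∧
    ∀ b, ∑ a ∈ I, cartanMatrix n p a b = ((∑ a ∈ I, p a) / n : ℕ) := by
  simp only [cartanMatrix, IsGammaCycle] at *
  obtain ⟨a, ha, hIeq⟩ := hI
  set γ : ZMod n → ZMod n := fun a => a + (p a : ZMod n) with hγ
  set m := Function.minimalPeriod γ a with hm
  set s : ℕ → ℕ := fun k => ∑ l ∈ Finset.range k, p (γ^[l] a) with hs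
  have hiter : ∀ k, γ^[k] a = a + ((s k : ℕ) : ZMod n) := by
    intro k
    induction k with
    | zero => simp [hs]
    | succ k ih =>
      rw [Function.iterate_succ_apply']
      show γ^[k] a + (p (γ^[k] a) : ZMod n) = _
      have h2 : s (k+1) = s k + p (γ^[k] a) := Finset.sum_range_succ _ _
      rw [h2, ih]; push_cast; ring
  have hinj : Set.InjOn (fun k => γ^[k] a) ↑(Finset.range m) := by
    rw [Finset.coe_range]
    exact Function.iterate_injOn_Iio_minimalPeriod
  have hsum : ∀ (g : ZMod n → ℕ), ∑ x ∈ I, g x = ∑ k ∈ Finset.range m, g (γ^[k] a) := by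
    intro g
    rw [hIeq, Finset.sum_image (fun x hx y hy h => hinj hx hy h)]
  have hS : ∑ x ∈ I, p x = s m := by rw [hsum p]
  have hma : γ^[m] a = a := Function.iterate_minimalPeriod
  have hdvd : n ∣ s m := by
    have : a + ((s m : ℕ) : ZMod n) = a := by rw [← hiter m, hma]
    have h0 : ((s m : ℕ) : ZMod n) = 0 := by linear_combination this
    exact (ZMod.natCast_eq_zero_iff _ _).mp h0
  refine ⟨hS ▸ hdvd, fun b => ?_⟩
  have hcol : ∀ k, ∑ l ∈ Finset.range k, cnt n b (γ^[l] a) (p (γ^[l] a)) = cnt n b a (s k) := by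
    intro k
    induction k with
    | zero => simp [hs, cnt]
    | succ k ih =>
      rw [Finset.sum_range_succ, ih]
      have h2 : s (k+1) = s k + p (γ^[k] a) := Finset.sum_range_succ _ _
      rw [h2, cnt_add, ← hiter k]
  obtain ⟨q, hq⟩ := hdvd
  have hcard : ∑ x ∈ I, cnt n b x (p x) = q := by
    rw [hsum (fun x => cnt n b x (p x)), hcol m, hq, Nat.mul_comm, cnt_mul]
  have : ∑ x ∈ I, (((Finset.range (p x)).filter (fun i : ℕ => (x + (i : ZMod n) = b))).card : ℤ)
      = ((∑ x ∈ I, cnt n b x (p x) : ℕ) : ℤ) := by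
    push_cast [cnt]; rfl
  rw [this, hcard, hS, hq, Nat.mul_div_cancel_left q (Nat.pos_of_ne_zero (NeZero.ne n))]
end

section
/- Let p : ZMod n → ℕ be an admissible sequence (p(a) ≥ 1, p(a) ≤ p(a+1)+1) and γ(a) = a + p(a) on ZMod n. Then any two cycles of γ have the same length; moreover if a cycle I has length p and weight w = (Σ_{a∈I} p(a))/n, then the pair (p, w) is the same for all cycles and gcd(p, w) = 1. -/
open Function Matrix Finset

set_option linter.unusedSectionVars false
set_option linter.unusedTactic false
set_option linter.unusedVariables false


open Function Finset

namespace GammaAux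

variable (n : ℕ) [NeZero n] (p : ZMod n → ℕ)

/-- Integer lift of γ. -/
def glift (x : ℤ) : ℤ := x + p (x : ZMod n)

lemma glift_add_mul (x c : ℤ) : glift n p (x + c * n) = glift n p x + c * n := by
  unfold glift
  have h : ((x + c * n : ℤ) : ZMod n) = (x : ZMod n) := by push_cast; simp
  rw [h]; ring

variable {p} in
lemma glift_mono (hp2 : ∀ a, p a ≤ p (a + 1) + 1) : Monotone (glift n p) := by
  apply monotone_int_of_le_succ
  intro x
  unfold glift
  have h : ((x + 1 : ℤ) : ZMod n) = (x : ZMod n) + 1 := by push_cast; ring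
  rw [h]
  have := hp2 (x : ZMod n)
  have : (p (x : ZMod n) : ℤ) ≤ (p ((x : ZMod n) + 1) : ℤ) + 1 := by exact_mod_cast this
  linarith

variable {p} in
lemma glift_ge (hp1 : ∀ a, 1 ≤ p a) (x : ℤ) : x + 1 ≤ glift n p x := by
  have := hp1 (x : ZMod n)
  have : (1 : ℤ) ≤ (p (x : ZMod n) : ℤ) := by exact_mod_cast this
  unfold glift; linarith

lemma glift_iter_add (k : ℕ) (x c : ℤ) :
    (glift n p)^[k] (x + c * n) = (glift n p)^[k] x + c * n := by
  induction k with
  | zero => simp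
  | succ k ih => rw [Function.iterate_succ_apply', Function.iterate_succ_apply', ih,
      glift_add_mul]

lemma glift_proj (k : ℕ) (x : ℤ) :
    (((glift n p)^[k] x : ℤ) : ZMod n) = (fun a => a + (p a : ZMod n))^[k] (x : ZMod n) := by
  induction k with
  | zero => simp
  | succ k ih =>
    rw [Function.iterate_succ_apply', Function.iterate_succ_apply', ← ih]
    unfold glift
    push_cast
    ring

variable {p} in
lemma glift_iter_ge (hp1 : ∀ a, 1 ≤ p a) (k : ℕ) (x : ℤ) :
    x + k ≤ (glift n p)^[k] x := by
  induction k with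
  | zero => simp
  | succ k ih =>
    rw [Function.iterate_succ_apply']
    have := glift_ge n hp1 ((glift n p)^[k] x)
    push_cast
    push_cast at ih
    linarith

lemma glift_iter_of_eq {q : ℕ} {A M : ℤ} (h : (glift n p)^[q] A = A + M * n) (k : ℕ) :
    (glift n p)^[k * q] A = A + (k * M) * n := by
  induction k with
  | zero => simp
  | succ k ih =>
    have : (k + 1) * q = q + k * q := by ring
    rw [this, Function.iterate_add_apply, ih, glift_iter_add, h]
    push_cast
    ring

variable {n p} in
lemma glift_up (hp2 : ∀ a, p a ≤ p (a + 1) + 1) {q : ℕ} {A M : ℤ}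
    (h : A + (M * n + 1) ≤ (glift n p)^[q] A) (k : ℕ) (hk : 1 ≤ k) :
    A + (k * (M * n) + 1) ≤ (glift n p)^[k * q] A := by
  induction k with
  | zero => omega
  | succ k ih =>
    obtain rfl | hk' : k = 0 ∨ 1 ≤ k := by omega
    · simpa using h
    · have ih' := ih hk'
      have he : (k + 1) * q = q + k * q := by ring
      rw [he, Function.iterate_add_apply]
      have hm : A + ((k : ℤ) * M) * n ≤ (glift n p)^[k * q] A := by push_cast at ih' ⊢; linarith
      have := (glift_mono n hp2).iterate q hm
      rw [glift_iter_add] at this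
      push_cast at this ⊢
      linarith

variable {n p} in
lemma glift_down (hp2 : ∀ a, p a ≤ p (a + 1) + 1) {q : ℕ} {A M : ℤ}
    (h : (glift n p)^[q] A ≤ A + (M * n - 1)) (k : ℕ) (hk : 1 ≤ k) :
    (glift n p)^[k * q] A ≤ A + (k * (M * n) - 1) := by
  induction k with
  | zero => omega
  | succ k ih =>
    obtain rfl | hk' : k = 0 ∨ 1 ≤ k := by omega
    · simpa using h
    · have ih' := ih hk'
      have he : (k + 1) * q = q + k * q := by ring
      rw [he, Function.iterate_add_apply]
      have hm : (glift n p)^[k * q] A ≤ A + ((k : ℤ) * M) * n := by push_cast at ih' ⊢; linarith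
      have := (glift_mono n hp2).iterate q hm
      rw [glift_iter_add] at this
      push_cast at this ⊢
      linarith

variable {n p} in
lemma glift_exact_div (hp2 : ∀ a, p a ≤ p (a + 1) + 1) {q d : ℕ} {A M : ℤ}
    (hd : 1 ≤ d) (h : (glift n p)^[d * q] A = A + (d * M) * n) :
    (glift n p)^[q] A = A + M * n := by
  rcases lt_trichotomy ((glift n p)^[q] A) (A + M * n) with hlt | heq | hgt
  · have h1 : (glift n p)^[q] A ≤ A + (M * n - 1) := by linarith
    have := glift_down hp2 h1 d hd
    rw [h] at this
    push_cast at this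
    nlinarith [this]
  · exact heq
  · have h1 : A + (M * n + 1) ≤ (glift n p)^[q] A := by linarith
    have := glift_up hp2 h1 d hd
    rw [h] at this
    push_cast at this
    nlinarith [this]

end GammaAux
namespace GammaAux

variable {n : ℕ} [NeZero n] {p : ZMod n → ℕ}

lemma cycle_data (hp1 : ∀ a, 1 ≤ p a) (hp2 : ∀ a, p a ≤ p (a + 1) + 1)
    {I : Finset (ZMod n)} (hI : IsGammaCycle (fun a => a + (p a : ZMod n)) I) :
    ∃ (A : ℤ) (M : ℕ), 0 < I.card ∧ 0 < M ∧
      (glift n p)^[I.card] A = A + (M : ℤ) * n ∧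
      (∑ a ∈ I, p a) = M * n ∧ Nat.Coprime I.card M := by
  obtain ⟨a, ha, rfl⟩ := hI
  set γ : ZMod n → ZMod n := fun a => a + (p a : ZMod n) with hγ
  set q := Function.minimalPeriod γ a with hqdef
  have hq : 0 < q := Function.minimalPeriod_pos_of_mem_periodicPts ha
  have hinj : ∀ x ∈ Finset.range q, ∀ y ∈ Finset.range q,
      γ^[x] a = γ^[y] a → x = y := by
    intro x hx y hy hxy
    exact Function.iterate_injOn_Iio_minimalPeriod
      (by simpa using Finset.mem_range.mp hx) (by simpa using Finset.mem_range.mp hy) hxy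
  have hcard : (Finset.image (fun k => γ^[k] a) (Finset.range q)).card = q := by
    rw [Finset.card_image_of_injOn (fun x hx y hy => hinj x hx y hy), Finset.card_range]
  set A : ℤ := (a.val : ℤ) with hAdef
  have hA : ((A : ℤ) : ZMod n) = a := by
    rw [hAdef, Int.cast_natCast]
    exact ZMod.natCast_rightInverse a
  have hper : γ^[q] a = a := Function.isPeriodicPt_minimalPeriod γ a
  have hproj : ∀ k : ℕ, (((glift n p)^[k] A : ℤ) : ZMod n) = γ^[k] a := by
    intro k; rw [glift_proj, hA]
  have hdvd : (n : ℤ) ∣ (glift n p)^[q] A - A := by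
    have : ((((glift n p)^[q] A - A : ℤ)) : ZMod n) = 0 := by
      push_cast
      rw [hproj q, hA, hper]
      ring
    exact (ZMod.intCast_zmod_eq_zero_iff_dvd _ n).mp this
  obtain ⟨c, hc⟩ := hdvd
  have hgrow : A + (q : ℤ) ≤ (glift n p)^[q] A := glift_iter_ge n hp1 q A
  have hnpos : (0 : ℤ) < n := by exact_mod_cast (NeZero.pos n)
  have hcpos : 0 < c := by nlinarith [hgrow, hc, hq]
  refine ⟨A, c.toNat, by rw [hcard]; exact hq, by omega, ?_, ?_, ?_⟩
  · rw [hcard]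
    have : (c.toNat : ℤ) = c := Int.toNat_of_nonneg hcpos.le
    rw [this]; linarith [hc]
  · -- sum
    have hsum1 : (∑ x ∈ Finset.image (fun k => γ^[k] a) (Finset.range q), p x)
        = ∑ k ∈ Finset.range q, p (γ^[k] a) := Finset.sum_image hinj
    have hsum2 : (∑ k ∈ Finset.range q, (p (γ^[k] a) : ℤ))
        = ∑ k ∈ Finset.range q, ((glift n p)^[k + 1] A - (glift n p)^[k] A) := by
      apply Finset.sum_congr rfl
      intro k _
      rw [Function.iterate_succ_apply']
      have : glift n p ((glift n p)^[k] A) = (glift n p)^[k] A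
          + p ((((glift n p)^[k] A : ℤ)) : ZMod n) := rfl
      rw [this, hproj k]
      ring
    have hsum3 : (∑ k ∈ Finset.range q, ((glift n p)^[k + 1] A - (glift n p)^[k] A))
        = (glift n p)^[q] A - A := by
      rw [Finset.sum_range_sub (fun k => (glift n p)^[k] A)]
      simp
    have hfin : ((∑ x ∈ Finset.image (fun k => γ^[k] a) (Finset.range q), p x : ℕ) : ℤ)
        = (c.toNat : ℤ) * n := by
      rw [hsum1]
      push_cast
      rw [hsum2, hsum3, hc, Int.toNat_of_nonneg hcpos.le]
      ring
    exact_mod_cast hfin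
  · -- coprime
    rw [hcard]
    set d := Nat.gcd q c.toNat with hddef
    have hd1 : 1 ≤ d := Nat.gcd_pos_of_pos_left _ hq
    have hqd : d * (q / d) = q := Nat.mul_div_cancel' (Nat.gcd_dvd_left _ _) 
    have hMd : d * (c.toNat / d) = c.toNat := Nat.mul_div_cancel' (Nat.gcd_dvd_right _ _)
    have heq : (glift n p)^[d * (q / d)] A = A + ((d : ℤ) * (c.toNat / d : ℕ)) * n := by
      rw [hqd]
      have : ((d : ℤ) * ((c.toNat / d : ℕ) : ℤ)) = (c.toNat : ℤ) := by
        exact_mod_cast congrArg (Nat.cast : ℕ → ℤ) hMd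
      rw [this, Int.toNat_of_nonneg hcpos.le]
      linarith [hc]
    have hexact := glift_exact_div hp2 hd1 heq
    have hper' : γ^[q / d] a = a := by
      rw [← hproj (q / d), hexact]
      push_cast
      rw [hA]
      simp
    have hdvd2 : q ∣ q / d := Function.IsPeriodicPt.minimalPeriod_dvd hper'
    have hle : q / d ≤ q := Nat.div_le_self q d
    have hqdpos : 0 < q / d := Nat.div_pos (Nat.le_of_dvd hq (Nat.gcd_dvd_left _ _)) (by omega)
    have heq2 : q / d = q := Nat.le_antisymm hle (Nat.le_of_dvd hqdpos hdvd2)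
    rw [heq2] at hqd
    exact Nat.eq_of_mul_eq_mul_right hq (by rw [one_mul]; exact hqd)

lemma rot_eq (hp2 : ∀ a, p a ≤ p (a + 1) + 1) {A B : ℤ} {q₁ q₂ M₁ M₂ : ℕ}
    (hq₁ : 0 < q₁) (hq₂ : 0 < q₂)
    (hA : (glift n p)^[q₁] A = A + (M₁ : ℤ) * n)
    (hB : (glift n p)^[q₂] B = B + (M₂ : ℤ) * n) :
    M₁ * q₂ = M₂ * q₁ := by
  have hnpos : (0 : ℤ) < n := by exact_mod_cast (NeZero.pos n)
  set c : ℤ := (A - B) / n with hcdef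
  set B' : ℤ := B + c * n with hB'def
  have hBA : B' ≤ A ∧ A ≤ B' + n := by
    have h1 := Int.emod_nonneg (A - B) (by positivity : (n:ℤ) ≠ 0)
    have h2 := Int.emod_lt_of_pos (A - B) hnpos
    have h3 := Int.mul_ediv_add_emod (A - B) n
    constructor <;> [nlinarith; nlinarith]
  have hB'per : (glift n p)^[q₂] B' = B' + (M₂ : ℤ) * n := by
    rw [hB'def, glift_iter_add, hB]; ring
  -- iterate twice around the combined period
  have hAk : ∀ k : ℕ, (glift n p)^[k * (q₂ * q₁)] A = A + ((k * (q₂ * M₁) : ℕ) : ℤ) * n := by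
    intro k
    have h1 := glift_iter_of_eq n p hA q₂
    have h2 := glift_iter_of_eq n p (q := q₂ * q₁) (M := (q₂ : ℤ) * M₁) h1 k
    rw [h2]; push_cast; ring
  have hBk : ∀ k : ℕ, (glift n p)^[k * (q₂ * q₁)] B' = B' + ((k * (q₁ * M₂) : ℕ) : ℤ) * n := by
    intro k
    have h1 := glift_iter_of_eq n p hB'per q₁
    have h2 := glift_iter_of_eq n p (q := q₁ * q₂) (M := (q₁ : ℤ) * M₂) h1 k
    have : k * (q₂ * q₁) = k * (q₁ * q₂) := by ring
    rw [this, h2]; push_cast; ring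
  have key : ∀ k : ℕ,
      B' + ((k * (q₁ * M₂) : ℕ) : ℤ) * n ≤ A + ((k * (q₂ * M₁) : ℕ) : ℤ) * n ∧
      A + ((k * (q₂ * M₁) : ℕ) : ℤ) * n ≤ B' + n + ((k * (q₁ * M₂) : ℕ) : ℤ) * n := by
    intro k
    constructor
    · have := (glift_mono n hp2).iterate (k * (q₂ * q₁)) hBA.1
      rwa [hAk k, hBk k] at this
    · have h1 : A ≤ B' + 1 * n := by linarith [hBA.2]
      have := (glift_mono n hp2).iterate (k * (q₂ * q₁)) h1
      rw [hAk k] at this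
      have h2 : (glift n p)^[k * (q₂ * q₁)] (B' + 1 * (n:ℤ)) =
          (glift n p)^[k * (q₂ * q₁)] B' + 1 * n := glift_iter_add n p _ B' 1
      rw [h2, hBk k] at this
      linarith
  have k2 := key 2
  have hD : ((q₂ * M₁ : ℕ) : ℤ) = ((q₁ * M₂ : ℕ) : ℤ) := by
    push_cast at k2 ⊢
    nlinarith [k2.1, k2.2, hBA.1, hBA.2]
  have h : q₂ * M₁ = q₁ * M₂ := by exact_mod_cast hD
  rw [mul_comm M₁ q₂, mul_comm M₂ q₁]
  exact h

end GammaAux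
/-- any two cycles of the resolution quiver have the same length
and the same weight, and the length and weight are coprime. -/
theorem cycles_same_length_weight (n : ℕ) [NeZero n] (p : ZMod n → ℕ)
    (hp1 : ∀ a, 1 ≤ p a) (hp2 : ∀ a, p a ≤ p (a + 1) + 1)
    (I J : Finset (ZMod n))
    (hI : IsGammaCycle (fun a => a + (p a : ZMod n)) I)
    (hJ : IsGammaCycle (fun a => a + (p a : ZMod n)) J) :
    I.card = J.card ∧
    (∑ a ∈ I, p a) / n = (∑ a ∈ J, p a) / n ∧
    Nat.Coprime I.card ((∑ a ∈ I, p a) / n) := by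
  obtain ⟨A, M₁, hIc, hM₁, hAper, hIsum, hIcop⟩ := GammaAux.cycle_data hp1 hp2 hI
  obtain ⟨B, M₂, hJc, hM₂, hBper, hJsum, hJcop⟩ := GammaAux.cycle_data hp1 hp2 hJ
  have hrot : M₁ * J.card = M₂ * I.card := GammaAux.rot_eq hp2 hIc hJc hAper hBper
  have h1 : I.card ∣ J.card := by
    apply hIcop.dvd_of_dvd_mul_right
    rw [mul_comm, hrot]
    exact dvd_mul_left I.card M₂
  have h2 : J.card ∣ I.card := by
    apply hJcop.dvd_of_dvd_mul_right
    rw [mul_comm, ← hrot]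
    exact dvd_mul_left J.card M₁
  have hcc : I.card = J.card := Nat.dvd_antisymm h1 h2
  have hMM : M₁ = M₂ := by
    rw [hcc] at hrot
    exact Nat.eq_of_mul_eq_mul_right hJc hrot
  have hnpos : 0 < n := NeZero.pos n
  have hIdiv : (∑ a ∈ I, p a) / n = M₁ := by rw [hIsum]; exact Nat.mul_div_cancel M₁ hnpos
  have hJdiv : (∑ a ∈ J, p a) / n = M₂ := by rw [hJsum]; exact Nat.mul_div_cancel M₂ hnpos
  exact ⟨hcc, by rw [hIdiv, hJdiv, hMM], by rw [hIdiv]; exact hIcop⟩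
end

section
/- Let p : ZMod n → ℕ be an admissible sequence, C the Cartan matrix with C(a,b) = #{0 ≤ i < p(a) : a+i = b}, viewed over ℚ, and let p̄ be the common length and w the common weight of the cycles of γ(a) = a + p(a). Then C admits a weighting and a coweighting over ℚ, and its magnitude equals p̄ / w. -/
open Function Matrix Finset

/-!
Lift `γ` to `G x = x + p x` on `ℕ`. Row `a` of `C` sums a vector over the residues of
`[a, a + p a)`, so the increments of any `Φ : ℕ → ℚ` with `Φ ∘ G = Φ + 1` and
`Φ (x + n) = Φ x + s` form a weighting of total `s`. After `n` steps every orbit of `γ` lies on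
a cycle, along which `G` advances by `n * w` in `p̄` steps; so the sum of `p̄` consecutive
iterates of `G`, started after `n` steps and divided by `n * w`, is such a `Φ` with `s = p̄ / w`.

A coweighting exists as soon as every `v` with `C v = 0` sums to zero, and it does: the partial
sums of `v` are `G`-invariant, yet grow by `w • ∑ v` along a cycle. Finally, the totals of a
weighting `α` and a coweighting `β` are both equal to `β C α`.
-/

theorem Matrix.sum_eq_sum_of_mulVec_eq_one_of_vecMul_eq_one {R m l : Type*} [CommSemiring R]
    [Fintype m] [Fintype l] {M : Matrix m l R} {α : l → R} {β : m → R}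
    (hα : M *ᵥ α = fun _ => 1) (hβ : β ᵥ* M = fun _ => 1) : ∑ i, α i = ∑ i, β i :=
  calc ∑ i, α i = (β ᵥ* M) ⬝ᵥ α := by simp [hβ, dotProduct]
    _ = β ⬝ᵥ (M *ᵥ α) := (dotProduct_mulVec β M α).symm
    _ = ∑ i, β i := by simp [hα, dotProduct]

theorem Matrix.exists_vecMul_eq_of_dotProduct_eq_zero {K m l : Type*} [Field K] [Fintype m]
    [Fintype l] [DecidableEq m] [DecidableEq l] (M : Matrix m l K) (y : l → K)
    (h : ∀ v, M *ᵥ v = 0 → y ⬝ᵥ v = 0) : ∃ β, β ᵥ* M = y := by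
  have hy : dotProductEquiv K l y ∈ LinearMap.range M.mulVecLin.dualMap := by
    rw [LinearMap.range_dualMap_eq_dualAnnihilator_ker, Submodule.mem_dualAnnihilator]
    exact fun v hv => h v hv
  obtain ⟨φ, hφ⟩ := hy
  refine ⟨(dotProductEquiv K m).symm φ,
    (dotProductEquiv K l).injective (LinearMap.ext fun v => ?_)⟩
  rw [← hφ, dotProductEquiv_apply_apply, ← dotProduct_mulVec, ← dotProductEquiv_apply_apply,
    LinearEquiv.apply_symm_apply]
  rfl

theorem ZMod.sum_range_natCast (n : ℕ) [NeZero n] {M : Type*} [AddCommMonoid M]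
    (f : ZMod n → M) : ∑ i ∈ range n, f i = ∑ b, f b :=
  Finset.sum_nbij' (fun i => (i : ZMod n)) ZMod.val (by simp) (by simp [ZMod.val_lt])
    (fun i hi => ZMod.val_cast_of_lt (mem_range.1 hi)) (fun b _ => ZMod.natCast_zmod_val b)
    (fun _ _ => rfl)

namespace Function

variable {α : Type*} (f : α → α)

theorem iterate_card_mem_periodicPts [Fintype α] (x : α) :
    f^[Fintype.card α] x ∈ periodicPts f := by
  obtain ⟨i, j, hne, heq⟩ := Fintype.exists_ne_map_eq_of_card_lt
    (fun k : Fin (Fintype.card α + 1) => f^[k] x) (by simp)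
  wlog hij : i < j generalizing i j
  · exact this j i hne.symm heq.symm (lt_of_le_of_ne (not_lt.1 hij) hne.symm)
  have hi : f^[i] x ∈ periodicPts f := by
    refine mk_mem_periodicPts (Nat.sub_pos_of_lt hij) ?_
    change f^[j - i] (f^[i] x) = f^[i] x
    rw [← iterate_add_apply, Nat.sub_add_cancel hij.le]
    exact heq.symm
  rw [← Nat.sub_add_cancel (Nat.lt_succ_iff.1 i.isLt), iterate_add_apply]
  exact (bijOn_periodicPts f).mapsTo.iterate _ hi

variable [DecidableEq α] (a : α)

theorem card_image_iterate_range_minimalPeriod :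
    ((range (minimalPeriod f a)).image (f^[·] a)).card = minimalPeriod f a := by
  rw [card_image_of_injOn (by simpa using iterate_injOn_Iio_minimalPeriod), card_range]

theorem sum_image_iterate_range_minimalPeriod {M : Type*} [AddCommMonoid M] (φ : α → M) :
    ∑ b ∈ (range (minimalPeriod f a)).image (f^[·] a), φ b =
      ∑ k ∈ range (minimalPeriod f a), φ (f^[k] a) :=
  sum_image fun _ hi _ hj h => iterate_injOn_Iio_minimalPeriod (by simpa using hi)
    (by simpa using hj) h

end Function

namespace Nakayama

variable {n : ℕ} (p : ZMod n → ℕ)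

def gamma (a : ZMod n) : ZMod n := a + p a

def gammaLift (x : ℕ) : ℕ := x + p x

theorem gammaLift_iterate_natCast (k x : ℕ) :
    (((gammaLift p)^[k] x : ℕ) : ZMod n) = (gamma p)^[k] x :=
  Semiconj.iterate_right (f := Nat.cast) (fun y => by simp [gammaLift, gamma]) k x

theorem gammaLift_iterate_add (k x : ℕ) : (gammaLift p)^[k] (x + n) = (gammaLift p)^[k] x + n :=
  (Semiconj.iterate_right (f := (· + n)) (ga := gammaLift p) (gb := gammaLift p)
    (fun y => by simp [gammaLift]; ring) k x).symm

theorem gammaLift_iterate (k x : ℕ) :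
    (gammaLift p)^[k] x = x + ∑ j ∈ range k, p ((gamma p)^[j] x) := by
  induction k with
  | zero => simp
  | succ k ih =>
    rw [iterate_succ_apply', sum_range_succ, ← gammaLift_iterate_natCast, gammaLift, ih]
    ring

theorem le_gammaLift_iterate (hp1 : ∀ a, 1 ≤ p a) (k x : ℕ) :
    x + k ≤ (gammaLift p)^[k] x := by
  rw [gammaLift_iterate]
  simpa using Finset.card_nsmul_le_sum (range k) _ 1 fun j _ => hp1 _

theorem cartanMatrix_mulVec_apply [NeZero n] {R : Type*} [CommRing R] (v : ZMod n → R)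
    (a : ZMod n) :
    ((cartanMatrix n p).map (Int.cast : ℤ → R) *ᵥ v) a =
      ∑ i ∈ range (p a), v (a + i) := by
  rw [← Finset.sum_fiberwise (range (p a)) (fun i : ℕ => a + (i : ZMod n))]
  refine Finset.sum_congr rfl fun b _ => ?_
  rw [Finset.sum_congr rfl fun i hi => congrArg v (mem_filter.1 hi).2, sum_const, nsmul_eq_mul]
  simp [cartanMatrix]

section Weighting

variable {p} {Φ : ℕ → ℚ} {s : ℚ}

def increments (Φ : ℕ → ℚ) (b : ZMod n) : ℚ := Φ (b.val + 1) - Φ b.val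

theorem increments_natCast (hΦ_add : ∀ x, Φ (x + n) = Φ x + s) (x : ℕ) :
    increments Φ (x : ZMod n) = Φ (x + 1) - Φ x := by
  have hper : Periodic (fun x => Φ (x + 1) - Φ x) n := fun x => by
    simp only [add_right_comm x n 1, hΦ_add]
    ring
  rw [increments, ZMod.val_natCast]
  exact hper.map_mod_nat x

theorem sum_range_increments (hΦ_add : ∀ x, Φ (x + n) = Φ x + s) (x k : ℕ) :
    ∑ i ∈ range k, increments Φ ((x + i : ℕ) : ZMod n) = Φ (x + k) - Φ x := by
  simp_rw [increments_natCast hΦ_add, add_assoc]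
  exact sum_range_sub (fun i => Φ (x + i)) k

theorem cartanMatrix_mulVec_increments [NeZero n]
    (hΦ_gammaLift : ∀ x, Φ (gammaLift p x) = Φ x + 1)
    (hΦ_add : ∀ x, Φ (x + n) = Φ x + s) :
    (cartanMatrix n p).map (Int.cast : ℤ → ℚ) *ᵥ increments Φ = fun _ => 1 := by
  funext a
  have hcast : ∀ i : ℕ, a + (i : ZMod n) = ((a.val + i : ℕ) : ZMod n) := fun i => by
    push_cast [ZMod.natCast_zmod_val]
    rfl
  rw [cartanMatrix_mulVec_apply p]
  simp_rw [hcast, sum_range_increments hΦ_add]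
  have hG : a.val + p a = gammaLift p a.val := by rw [gammaLift, ZMod.natCast_zmod_val]
  rw [hG, hΦ_gammaLift]
  ring

theorem sum_increments [NeZero n] (hΦ_add : ∀ x, Φ (x + n) = Φ x + s) :
    ∑ b : ZMod n, increments Φ b = s := by
  calc ∑ b, increments Φ b = ∑ i ∈ range n, increments Φ ((0 + i : ℕ) : ZMod n) := by
        simp [ZMod.sum_range_natCast]
    _ = s := by rw [sum_range_increments hΦ_add, hΦ_add]; ring

end Weighting

section Cycles

variable [NeZero n] {pbar w : ℕ}

theorem iterate_n_mem_periodicPts (x : ℕ) :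
    (((gammaLift p)^[n] x : ℕ) : ZMod n) ∈ periodicPts (gamma p) := by
  rw [gammaLift_iterate_natCast]
  simpa using iterate_card_mem_periodicPts (gamma p) (x : ZMod n)

theorem isGammaCycle_orbit_iterate_n (x : ℕ) :
    IsGammaCycle (gamma p) ((range (minimalPeriod (gamma p) ((gammaLift p)^[n] x))).image
      ((gamma p)^[·] ((gammaLift p)^[n] x))) :=
  ⟨_, iterate_n_mem_periodicPts p x, rfl⟩

theorem minimalPeriod_iterate_n (hpbar : ∀ I, IsGammaCycle (gamma p) I → I.card = pbar)
    (x : ℕ) : minimalPeriod (gamma p) ((gammaLift p)^[n] x) = pbar := by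
  rw [← hpbar _ (isGammaCycle_orbit_iterate_n p x), card_image_iterate_range_minimalPeriod]

theorem gammaLift_iterate_iterate_n
    (hpbar : ∀ I, IsGammaCycle (gamma p) I → I.card = pbar)
    (hw : ∀ I, IsGammaCycle (gamma p) I → ∑ a ∈ I, p a = n * w) (x : ℕ) :
    (gammaLift p)^[pbar] ((gammaLift p)^[n] x) = (gammaLift p)^[n] x + n * w := by
  rw [← hw _ (isGammaCycle_orbit_iterate_n p x), sum_image_iterate_range_minimalPeriod,
    minimalPeriod_iterate_n p hpbar, gammaLift_iterate, gammaLift_iterate_natCast]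

end Cycles

theorem exists_potential (L c : ℕ) (hc : 0 < c)
    (hshift : ∀ x, (gammaLift p)^[L] ((gammaLift p)^[n] x) = (gammaLift p)^[n] x + c) :
    ∃ Φ : ℕ → ℚ, (∀ x, Φ (gammaLift p x) = Φ x + 1) ∧
      ∀ x, Φ (x + n) = Φ x + L * n / c := by
  set G := gammaLift p
  set orbitSum : ℕ → ℚ := fun y => ∑ j ∈ range L, (G^[j] y : ℚ)
  have orbitSum_apply : ∀ y, orbitSum (G y) = orbitSum y + (G^[L] y - y) := fun y => by
    have h := sum_range_sub (fun j => (G^[j] y : ℚ)) L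
    simp only [sum_sub_distrib, iterate_succ_apply, iterate_zero_apply] at h
    simp only [orbitSum]
    linarith
  have orbitSum_add : ∀ y, orbitSum (y + n) = orbitSum y + L * n := fun y => by
    simp only [orbitSum, gammaLift_iterate_add, Nat.cast_add, sum_add_distrib, sum_const,
      card_range, nsmul_eq_mul, G]
  refine ⟨fun x => orbitSum (G^[n] x) / c, fun x => ?_, fun x => ?_⟩
  · dsimp only
    rw [← iterate_succ_apply, iterate_succ_apply', orbitSum_apply, hshift]
    field_simp
    push_cast
    ring
  · dsimp only
    rw [gammaLift_iterate_add, orbitSum_add]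
    ring

theorem sum_eq_zero_of_cartanMatrix_mulVec_eq_zero [NeZero n] {m x c : ℕ} (hc : 0 < c)
    (hx : (gammaLift p)^[m] x = x + n * c) (v : ZMod n → ℚ)
    (hv : (cartanMatrix n p).map (Int.cast : ℤ → ℚ) *ᵥ v = 0) : ∑ b, v b = 0 := by
  set W : ℕ → ℚ := fun y => ∑ i ∈ range y, v i
  have hW_gammaLift : ∀ y, W (gammaLift p y) = W y := fun y => by
    have hrow := congrFun hv y
    rw [cartanMatrix_mulVec_apply p] at hrow
    simp only [W, gammaLift, sum_range_add, Nat.cast_add, hrow, Pi.zero_apply, add_zero]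
  have hW_iterate : ∀ k y, W ((gammaLift p)^[k] y) = W y := fun k y => by
    simpa using Semiconj.iterate_right (f := W) (gb := id) hW_gammaLift k y
  have hW_period : ∀ y, W (n + y) = ∑ b, v b + W y := fun y => by
    simp only [W, sum_range_add, ZMod.sum_range_natCast, Nat.cast_add, ZMod.natCast_self, zero_add]
  have hW_add : ∀ k y, W (y + n * k) = W y + k * ∑ b, v b := fun k => by
    induction k with
    | zero => simp
    | succ k ih =>
      intro y
      rw [show y + n * (k + 1) = n + (y + n * k) by ring, hW_period, ih]
      push_cast
      ring
  have h := hW_add c x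
  rw [← hx, hW_iterate, left_eq_add, mul_eq_zero] at h
  exact h.resolve_left (by exact_mod_cast hc.ne')

end Nakayama

open Nakayama

theorem nakayama_magnitude_general (n : ℕ) [NeZero n] (p : ZMod n → ℕ)
    (hp1 : ∀ a, 1 ≤ p a)
    (pbar w : ℕ)
    (hpbar : ∀ I : Finset (ZMod n),
      IsGammaCycle (fun a => a + (p a : ZMod n)) I → I.card = pbar)
    (hw : ∀ I : Finset (ZMod n),
      IsGammaCycle (fun a => a + (p a : ZMod n)) I → ∑ a ∈ I, p a = n * w) :
    ∃ α β : ZMod n → ℚ,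
      ((cartanMatrix n p).map (Int.cast : ℤ → ℚ)).mulVec α = (fun _ => 1) ∧
      Matrix.vecMul β ((cartanMatrix n p).map (Int.cast : ℤ → ℚ)) = (fun _ => 1) ∧
      ∑ a, α a = (pbar : ℚ) / w ∧ ∑ a, β a = (pbar : ℚ) / w := by
  have hshift := gammaLift_iterate_iterate_n p hpbar hw
  have hpbar_pos : 0 < pbar := minimalPeriod_iterate_n p hpbar 0 ▸
    minimalPeriod_pos_of_mem_periodicPts (iterate_n_mem_periodicPts p 0)
  have hnw_pos : 0 < n * w := by
    have := le_gammaLift_iterate p hp1 pbar ((gammaLift p)^[n] 0)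
    rw [hshift] at this
    omega
  obtain ⟨Φ, hΦ_gammaLift, hΦ_add⟩ := exists_potential p pbar (n * w) hnw_pos hshift
  have hα := cartanMatrix_mulVec_increments hΦ_gammaLift hΦ_add
  obtain ⟨β, hβ⟩ := exists_vecMul_eq_of_dotProduct_eq_zero
      ((cartanMatrix n p).map (Int.cast : ℤ → ℚ)) (fun _ => 1) fun v hv => by
    simpa [dotProduct] using
      sum_eq_zero_of_cartanMatrix_mulVec_eq_zero p (pos_of_mul_pos_right hnw_pos n.zero_le)
        (hshift 0) v hv
  have hsum : ∑ b : ZMod n, increments Φ b = (pbar : ℚ) / w := by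
    rw [sum_increments hΦ_add, Nat.cast_mul, mul_comm (n : ℚ),
      mul_div_mul_right _ _ (Nat.cast_ne_zero.2 (NeZero.ne n))]
  exact ⟨increments Φ, β, hα, hβ, hsum,
    (sum_eq_sum_of_mulVec_eq_one_of_vecMul_eq_one hα hβ) ▸ hsum⟩

/-- the Cartan matrix of a Nakayama algebra has magnitude `p̄ / w`
in `ℚ`, where `p̄` is the common length and `w` the common weight of the cycles
of the resolution quiver. -/
theorem nakayama_magnitude (n : ℕ) [NeZero n] (p : ZMod n → ℕ)
    (hp1 : ∀ a, 1 ≤ p a) (hp2 : ∀ a, p a ≤ p (a + 1) + 1)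
    (pbar w : ℕ)
    (hpbar : ∀ I : Finset (ZMod n),
      IsGammaCycle (fun a => a + (p a : ZMod n)) I → I.card = pbar)
    (hw : ∀ I : Finset (ZMod n),
      IsGammaCycle (fun a => a + (p a : ZMod n)) I → ∑ a ∈ I, p a = n * w) :
    ∃ α β : ZMod n → ℚ,
      ((cartanMatrix n p).map (Int.cast : ℤ → ℚ)).mulVec α = (fun _ => 1) ∧
      Matrix.vecMul β ((cartanMatrix n p).map (Int.cast : ℤ → ℚ)) = (fun _ => 1) ∧
      ∑ a, α a = (pbar : ℚ) / w ∧ ∑ a, β a = (pbar : ℚ) / w :=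
  nakayama_magnitude_general n p hp1 pbar w hpbar hw
end

section
/- Let p : ZMod n → ℕ be an admissible sequence, C the associated integer Cartan matrix C(a,b) = #{0 ≤ i < p(a) : a+i = b}, and γ(a) = a + p(a). Then the corank of C over ℚ equals the number of cycles of γ minus 1; equivalently, the rank of C equals n minus the number of cycles of γ plus 1. -/
set_option linter.unusedSectionVars false
set_option linter.unusedVariables false

open Function Matrix Finset

namespace CartanAux

variable {α : Type*} [DecidableEq α] [Fintype α]

/-- orbit finset of a periodic point -/
noncomputable def orb (f : α → α) (a : α) : Finset α :=
  Finset.image (fun k => f^[k] a) (Finset.range (Function.minimalPeriod f a))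

lemma iter_mem_periodicPts {f : α → α} {a : α} (ha : a ∈ periodicPts f) (m : ℕ) :
    f^[m] a ∈ periodicPts f := by
  induction m with
  | zero => exact ha
  | succ m ih =>
    rw [Function.iterate_succ_apply']
    obtain ⟨k, hk, hpt⟩ := ih
    exact ⟨k, hk, hpt.apply⟩

lemma orb_apply {f : α → α} {a : α} (ha : a ∈ periodicPts f) : orb f (f a) = orb f a := by
  unfold orb
  rw [Function.minimalPeriod_apply ha]
  have hd : 0 < minimalPeriod f a := minimalPeriod_pos_of_mem_periodicPts ha
  have hper : f^[minimalPeriod f a] a = a := isPeriodicPt_minimalPeriod f a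
  ext b
  simp only [Finset.mem_image, Finset.mem_range]
  constructor
  · rintro ⟨k, hk, rfl⟩
    rcases eq_or_lt_of_le (Nat.succ_le_of_lt hk) with h | h
    · exact ⟨0, hd, by
        rw [← Function.iterate_succ_apply, h, hper, Function.iterate_zero_apply]⟩
    · exact ⟨k + 1, h, by rw [← Function.iterate_succ_apply]⟩
  · rintro ⟨k, hk, rfl⟩
    cases k with
    | zero =>
      refine ⟨minimalPeriod f a - 1, by omega, ?_⟩
      rw [← Function.iterate_succ_apply]
      have : minimalPeriod f a - 1 + 1 = minimalPeriod f a := by omega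
      rw [Nat.succ_eq_add_one, this, hper, Function.iterate_zero_apply]
    | succ k => exact ⟨k, by omega, by rw [Function.iterate_succ_apply]⟩

lemma orb_iter {f : α → α} {a : α} (ha : a ∈ periodicPts f) (m : ℕ) :
    orb f (f^[m] a) = orb f a := by
  induction m with
  | zero => rfl
  | succ m ih =>
    rw [Function.iterate_succ_apply', orb_apply (iter_mem_periodicPts ha m), ih]

lemma orb_eq_of_iter {f : α → α} {a : α} {s t : ℕ}
    (hs : f^[s] a ∈ periodicPts f) (ht : f^[t] a ∈ periodicPts f) :
    orb f (f^[s] a) = orb f (f^[t] a) := by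
  rcases le_total s t with h | h
  · have : f^[t] a = f^[t - s] (f^[s] a) := by
      rw [← Function.iterate_add_apply]; congr 1; omega
    rw [this, orb_iter hs]
  · have : f^[s] a = f^[s - t] (f^[t] a) := by
      rw [← Function.iterate_add_apply]; congr 1; omega
    rw [this, orb_iter ht]

lemma exists_iter_periodic (f : α → α) (a : α) : ∃ m, f^[m] a ∈ periodicPts f := by
  obtain ⟨i, j, hne, heq⟩ :=
    Finite.exists_ne_map_eq_of_infinite (fun k : ℕ => f^[k] a)
  rcases hne.lt_or_gt with h | h
  · refine ⟨i, j - i, by omega, ?_⟩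
    show f^[j - i] (f^[i] a) = f^[i] a
    rw [← Function.iterate_add_apply]
    have : j - i + i = j := by omega
    rw [this]; exact heq.symm
  · refine ⟨j, i - j, by omega, ?_⟩
    show f^[i - j] (f^[j] a) = f^[j] a
    rw [← Function.iterate_add_apply]
    have : i - j + j = i := by omega
    rw [this]; exact heq

/-- the eventually-periodic point of the orbit of `a` -/
noncomputable def ep (f : α → α) (a : α) : α := f^[(exists_iter_periodic f a).choose] a

lemma ep_mem (f : α → α) (a : α) : ep f a ∈ periodicPts f :=
  (exists_iter_periodic f a).choose_spec

/-- the cycle which the orbit of `a` eventually enters -/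
noncomputable def cyc (f : α → α) (a : α) : Finset α := orb f (ep f a)

lemma cyc_apply (f : α → α) (a : α) : cyc f (f a) = cyc f a := by
  unfold cyc ep
  have h1 := (exists_iter_periodic f (f a)).choose_spec
  have h2 := (exists_iter_periodic f a).choose_spec
  have : f^[(exists_iter_periodic f (f a)).choose] (f a)
      = f^[(exists_iter_periodic f (f a)).choose + 1] a := by
    rw [Function.iterate_add_apply, Function.iterate_one]
  rw [this] at h1 ⊢
  exact orb_eq_of_iter h1 h2

lemma cyc_spec (f : α → α) (a : α) : IsGammaCycle f (cyc f a) :=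
  ⟨ep f a, ep_mem f a, rfl⟩

lemma cyc_of_periodic {f : α → α} {b : α} (hb : b ∈ periodicPts f) :
    cyc f b = orb f b := by
  unfold cyc ep
  have h1 := (exists_iter_periodic f b).choose_spec
  have h0 : f^[0] b ∈ periodicPts f := hb
  have := orb_eq_of_iter h1 h0
  simpa using this

lemma mem_orb_self {f : α → α} {b : α} (hb : b ∈ periodicPts f) : b ∈ orb f b := by
  unfold orb
  simp only [Finset.mem_image, Finset.mem_range]
  exact ⟨0, minimalPeriod_pos_of_mem_periodicPts hb, rfl⟩

end CartanAux


namespace CartanAux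

variable (n : ℕ) [NeZero n] (p : ZMod n → ℕ)

def gam : ZMod n → ZMod n := fun a => a + (p a : ZMod n)

noncomputable def Mlin : (ZMod n → ℚ) →ₗ[ℚ] (ZMod n → ℚ) :=
  ((cartanMatrix n p).map (Int.cast : ℤ → ℚ)).mulVecLin

def Llin : (ZMod n → ℚ) →ₗ[ℚ] (ZMod n → ℚ) where
  toFun y := fun a => y a - y (a + 1)
  map_add' y z := by funext a; simp [Pi.add_apply]; ring
  map_smul' c y := by funext a; simp [Pi.smul_apply, smul_eq_mul]; ring

def Nlin : (ZMod n → ℚ) →ₗ[ℚ] (ZMod n → ℚ) where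
  toFun y := fun a => y a - y (gam n p a)
  map_add' y z := by funext a; simp [Pi.add_apply]; ring
  map_smul' c y := by funext a; simp [Pi.smul_apply, smul_eq_mul]; ring

lemma Mlin_apply (x : ZMod n → ℚ) (a : ZMod n) :
    Mlin n p x a = ∑ i ∈ Finset.range (p a), x (a + (i : ZMod n)) := by
  have : Mlin n p x a = ∑ b : ZMod n, (((cartanMatrix n p a b : ℤ)) : ℚ) * x b := by
    simp [Mlin, Matrix.mulVecLin_apply, Matrix.mulVec, dotProduct, Matrix.map_apply]
  rw [this]
  have hentry : ∀ b : ZMod n, (((cartanMatrix n p a b : ℤ)) : ℚ)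
      = ∑ i ∈ Finset.range (p a), if a + (i : ZMod n) = b then (1 : ℚ) else 0 := by
    intro b
    rw [cartanMatrix, Finset.card_filter]
    push_cast
    rfl
  calc ∑ b : ZMod n, (((cartanMatrix n p a b : ℤ)) : ℚ) * x b
      = ∑ b : ZMod n, ∑ i ∈ Finset.range (p a),
          (if a + (i : ZMod n) = b then (1 : ℚ) else 0) * x b := by
        refine Finset.sum_congr rfl fun b _ => ?_
        rw [hentry, Finset.sum_mul]
    _ = ∑ i ∈ Finset.range (p a), ∑ b : ZMod n,
          (if a + (i : ZMod n) = b then x b else 0) := by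
        rw [Finset.sum_comm]
        refine Finset.sum_congr rfl fun i _ => Finset.sum_congr rfl fun b _ => ?_
        split <;> simp
    _ = ∑ i ∈ Finset.range (p a), x (a + (i : ZMod n)) := by
        refine Finset.sum_congr rfl fun i _ => ?_
        rw [Finset.sum_ite_eq]
        simp

lemma ML_eq (y : ZMod n → ℚ) : Mlin n p (Llin n y) = Nlin n p y := by
  funext a
  rw [Mlin_apply]
  have : ∀ i ∈ Finset.range (p a),
      Llin n y (a + (i : ZMod n))
        = (fun i : ℕ => y (a + (i : ZMod n))) i - (fun i : ℕ => y (a + (i : ZMod n))) (i + 1) := by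
    intro i _
    show y (a + (i : ZMod n)) - y (a + (i : ZMod n) + 1) = _
    push_cast
    ring_nf
  rw [Finset.sum_congr rfl this, Finset.sum_range_sub']
  simp [Nlin, gam]

end CartanAux


namespace CartanAux
section
variable (n : ℕ) [NeZero n] (p : ZMod n → ℕ)

lemma iter_eq (a : ZMod n) (m : ℕ) :
    (gam n p)^[m] a = a + ((∑ k ∈ Finset.range m, p ((gam n p)^[k] a) : ℕ) : ZMod n) := by
  induction m with
  | zero => simp
  | succ m ih =>
    rw [Function.iterate_succ_apply']
    show (gam n p)^[m] a + (p ((gam n p)^[m] a) : ZMod n) = _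
    rw [Finset.sum_range_succ, Nat.cast_add, ← add_assoc, ← ih]

variable {n p}

lemma block {x : ZMod n → ℚ} (hx : ∀ b, ∑ i ∈ Finset.range (p b), x (b + (i : ZMod n)) = 0)
    (a : ZMod n) (m : ℕ) :
    ∑ i ∈ Finset.range (∑ k ∈ Finset.range m, p ((gam n p)^[k] a)), x (a + (i : ZMod n)) = 0 := by
  induction m with
  | zero => simp
  | succ m ih =>
    rw [Finset.sum_range_succ, Finset.sum_range_add, ih, zero_add]
    set b := (gam n p)^[m] a with hb
    have key : ∀ i : ℕ,
        a + (((∑ k ∈ Finset.range m, p ((gam n p)^[k] a)) + i : ℕ) : ZMod n) = b + (i : ZMod n) := by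
      intro i
      rw [hb, iter_eq]
      push_cast
      ring
    calc ∑ i ∈ Finset.range (p b),
          x (a + (((∑ k ∈ Finset.range m, p ((gam n p)^[k] a)) + i : ℕ) : ZMod n))
        = ∑ i ∈ Finset.range (p b), x (b + (i : ZMod n)) :=
          Finset.sum_congr rfl fun i _ => by rw [key]
      _ = 0 := hx b

lemma sum_univ_shift (x : ZMod n → ℚ) (b : ZMod n) :
    ∑ i ∈ Finset.range n, x (b + (i : ZMod n)) = ∑ c : ZMod n, x c := by
  refine Finset.sum_bij' (fun i _ => b + (i : ZMod n)) (fun c _ => (c - b).val)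
    (fun i _ => Finset.mem_univ _) (fun c _ => Finset.mem_range.2 (ZMod.val_lt _))
    ?_ ?_ ?_
  · intro i hi
    show ((b + (i : ZMod n)) - b).val = i
    rw [add_sub_cancel_left, ZMod.val_cast_of_lt (Finset.mem_range.1 hi)]
  · intro c _
    show b + (((c - b).val : ℕ) : ZMod n) = c
    rw [ZMod.natCast_rightInverse (c - b)]
    ring
  · intro i _
    rfl

lemma rep (x : ZMod n → ℚ) (b : ZMod n) (w : ℕ) :
    ∑ i ∈ Finset.range (n * w), x (b + (i : ZMod n))
      = (w : ℚ) * ∑ i ∈ Finset.range n, x (b + (i : ZMod n)) := by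
  induction w with
  | zero => simp
  | succ w ih =>
    have h1 : n * (w + 1) = n * w + n := by ring
    rw [h1, Finset.sum_range_add, ih]
    have h2 : ∀ i : ℕ, b + ((n * w + i : ℕ) : ZMod n) = b + (i : ZMod n) := by
      intro i
      push_cast [ZMod.natCast_self]
      ring
    have h3 : ∑ i ∈ Finset.range n, x (b + ((n * w + i : ℕ) : ZMod n))
        = ∑ i ∈ Finset.range n, x (b + (i : ZMod n)) :=
      Finset.sum_congr rfl fun i _ => by rw [h2 i]
    rw [h3]
    push_cast
    ring

lemma hp_sum_ge (hp1 : ∀ a, 1 ≤ p a) (a : ZMod n) (m : ℕ) :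
    m ≤ ∑ k ∈ Finset.range m, p ((gam n p)^[k] a) := by
  calc m = ∑ _k ∈ Finset.range m, 1 := by simp
    _ ≤ _ := Finset.sum_le_sum fun k _ => hp1 _

lemma ker_sum_zero (hp1 : ∀ a, 1 ≤ p a) {x : ZMod n → ℚ}
    (hx : ∀ b, ∑ i ∈ Finset.range (p b), x (b + (i : ZMod n)) = 0) :
    ∑ c : ZMod n, x c = 0 := by
  obtain ⟨i, j, hne, heq⟩ :=
    Finite.exists_ne_map_eq_of_infinite (fun k : ℕ => (gam n p)^[k] (0 : ZMod n))
  wlog hij : i < j generalizing i j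
  · exact this j i hne.symm heq.symm (by omega)
  obtain ⟨d, rfl⟩ : ∃ d, j = i + d := ⟨j - i, by omega⟩
  have hd1 : 1 ≤ d := by omega
  set Ti : ℕ := ∑ k ∈ Finset.range i, p ((gam n p)^[k] (0 : ZMod n)) with hTi
  set D : ℕ := ∑ k ∈ Finset.range d, p ((gam n p)^[i + k] (0 : ZMod n)) with hD
  have hTj : (∑ k ∈ Finset.range (i + d), p ((gam n p)^[k] (0 : ZMod n))) = Ti + D :=
    Finset.sum_range_add (fun k => p ((gam n p)^[k] (0 : ZMod n))) i d
  set b : ZMod n := (gam n p)^[i] (0 : ZMod n) with hb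
  -- the chunk sum over [Ti, Ti + D) vanishes
  have hchunk : ∑ k ∈ Finset.range D, x (b + (k : ZMod n)) = 0 := by
    have h0 := block hx (0 : ZMod n) (i + d)
    rw [hTj, Finset.sum_range_add, block hx (0 : ZMod n) i, zero_add] at h0
    have key : ∀ k : ℕ, (0 : ZMod n) + ((Ti + k : ℕ) : ZMod n) = b + (k : ZMod n) := by
      intro k
      rw [hb, iter_eq, hTi]
      push_cast
      ring
    rwa [show (∑ k ∈ Finset.range D, x (0 + ((Ti + k : ℕ) : ZMod n)))
        = ∑ k ∈ Finset.range D, x (b + (k : ZMod n)) from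
      Finset.sum_congr rfl fun k _ => by rw [key k]] at h0
  -- D is a positive multiple of n
  have hD1 : 1 ≤ D := by
    have h4 := hp_sum_ge hp1 ((gam n p)^[i] (0 : ZMod n)) d
    have hiter : ∀ k, (gam n p)^[k] ((gam n p)^[i] (0:ZMod n)) = (gam n p)^[i + k] (0:ZMod n) := by
      intro k
      rw [← Function.iterate_add_apply]
      congr 1
      omega
    rw [show (∑ k ∈ Finset.range d, p ((gam n p)^[k] ((gam n p)^[i] (0:ZMod n))))
        = ∑ k ∈ Finset.range d, p ((gam n p)^[i + k] (0:ZMod n)) from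
      Finset.sum_congr rfl fun k _ => by rw [hiter k]] at h4
    omega
  have hdvd : n ∣ D := by
    have h1 : (0 : ZMod n) + (((Ti + D : ℕ)) : ZMod n) = (0 : ZMod n) + ((Ti : ℕ) : ZMod n) := by
      rw [← hTj, ← iter_eq, ← iter_eq]
      exact heq.symm
    have h2 : ((Ti : ℕ) : ZMod n) + ((D : ℕ) : ZMod n) = ((Ti : ℕ) : ZMod n) := by
      push_cast at h1
      linear_combination h1
    have h3 : ((D : ℕ) : ZMod n) = 0 := by
      have := add_eq_left.mp h2
      exact this
    exact (ZMod.natCast_eq_zero_iff D n).1 h3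
  obtain ⟨w, hw⟩ := hdvd
  have hw1 : 1 ≤ w := by
    rcases Nat.eq_zero_or_pos w with h | h
    · rw [h, mul_zero] at hw; omega
    · exact h
  rw [hw, rep, sum_univ_shift] at hchunk
  have hwq : (w : ℚ) ≠ 0 := by positivity
  exact (mul_eq_zero.1 hchunk).resolve_left hwq

end
end CartanAux


namespace CartanAux
section
variable {n : ℕ} [NeZero n] {p : ZMod n → ℕ}

lemma exists_preimage {x : ZMod n → ℚ} (hsum : ∑ c : ZMod n, x c = 0) :
    ∃ y, Llin n y = x := by
  refine ⟨fun a => -(∑ k ∈ Finset.range a.val, x ((k : ℕ) : ZMod n)), ?_⟩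
  funext a
  show -(∑ k ∈ Finset.range a.val, x ((k : ℕ) : ZMod n))
      - -(∑ k ∈ Finset.range (a + 1).val, x ((k : ℕ) : ZMod n)) = x a
  have hv : a.val < n := ZMod.val_lt a
  have ha : ((a.val : ℕ) : ZMod n) = a := ZMod.natCast_rightInverse a
  rcases Nat.lt_or_ge (a.val + 1) n with hlt | hge
  
  · have h1 : (a + 1).val = a.val + 1 := by
      conv_lhs => rw [← ha]
      rw [show ((a.val : ℕ) : ZMod n) + 1 = ((a.val + 1 : ℕ) : ZMod n) by push_cast; ring]
      exact ZMod.val_cast_of_lt hlt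
    rw [h1, Finset.sum_range_succ, ha]
    ring
  · have heqn : a.val + 1 = n := by omega
    have h1 : a + 1 = 0 := by
      rw [← ha, show ((a.val : ℕ) : ZMod n) + 1 = ((a.val + 1 : ℕ) : ZMod n) by push_cast; ring,
        heqn, ZMod.natCast_self]
    have hfull : ∑ k ∈ Finset.range n, x ((k : ℕ) : ZMod n) = 0 := by
      have := sum_univ_shift x 0
      simp only [zero_add] at this
      rw [this, hsum]
    rw [h1, ZMod.val_zero]
    simp only [Finset.range_zero, Finset.sum_empty, neg_zero, sub_zero]
    have h2 : ∑ k ∈ Finset.range (a.val + 1), x ((k : ℕ) : ZMod n) = 0 := by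
      rw [heqn]; exact hfull
    rw [Finset.sum_range_succ, ha] at h2
    linarith

lemma mem_ker_Nlin {x : ZMod n → ℚ} :
    x ∈ LinearMap.ker (Nlin n p) ↔ ∀ a, x a = x (gam n p a) := by
  rw [LinearMap.mem_ker]
  constructor
  · intro h a
    have := congrFun h a
    simpa [Nlin, sub_eq_zero] using this
  · intro h
    funext a
    simpa [Nlin, sub_eq_zero] using h a

lemma mem_ker_Llin {x : ZMod n → ℚ} :
    x ∈ LinearMap.ker (Llin n) ↔ ∀ a, x a = x (a + 1) := by
  rw [LinearMap.mem_ker]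
  constructor
  · intro h a
    have := congrFun h a
    simpa [Llin, sub_eq_zero] using this
  · intro h
    funext a
    simpa [Llin, sub_eq_zero] using h a

lemma kerL_const {x : ZMod n → ℚ} (hx : x ∈ LinearMap.ker (Llin n)) (a : ZMod n) :
    x a = x 0 := by
  rw [mem_ker_Llin] at hx
  have key : ∀ k : ℕ, x ((k : ℕ) : ZMod n) = x 0 := by
    intro k
    induction k with
    | zero => simp
    | succ k ih =>
      rw [show ((k + 1 : ℕ) : ZMod n) = ((k : ℕ) : ZMod n) + 1 by push_cast; ring, ← hx, ih]
  rw [← ZMod.natCast_rightInverse a, key]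

lemma kerL_le_kerN : LinearMap.ker (Llin n) ≤ LinearMap.ker (Nlin n p) := by
  intro x hx
  rw [mem_ker_Nlin]
  intro a
  rw [kerL_const hx a, kerL_const hx (gam n p a)]

noncomputable def kerLequiv : (LinearMap.ker (Llin n)) ≃ₗ[ℚ] ℚ where
  toFun x := x.1 0
  map_add' x y := rfl
  map_smul' c x := rfl
  invFun c := ⟨fun _ => c, by rw [mem_ker_Llin]; intro a; rfl⟩
  left_inv x := Subtype.ext (funext fun a => (kerL_const x.2 a).symm)
  right_inv c := rfl

lemma finrank_kerL : Module.finrank ℚ (LinearMap.ker (Llin n)) = 1 := by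
  rw [kerLequiv.finrank_eq, Module.finrank_self]

lemma ker_Mlin_eq (hp1 : ∀ a, 1 ≤ p a) :
    LinearMap.ker (Mlin n p) = Submodule.map (Llin n) (LinearMap.ker (Nlin n p)) := by
  ext x
  constructor
  · intro hx
    rw [LinearMap.mem_ker] at hx
    have hx' : ∀ b, ∑ i ∈ Finset.range (p b), x (b + (i : ZMod n)) = 0 := by
      intro b
      rw [← Mlin_apply n p x b, hx]
      rfl
    obtain ⟨y, hy⟩ := exists_preimage (ker_sum_zero hp1 hx')
    refine ⟨y, ?_, hy⟩
    show y ∈ LinearMap.ker (Nlin n p)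
    rw [LinearMap.mem_ker, ← ML_eq, hy, hx]
  · rintro ⟨y, hy, rfl⟩
    rw [LinearMap.mem_ker, ML_eq]
    exact hy

end
end CartanAux


namespace CartanAux
section
variable {n : ℕ} [NeZero n] (p : ZMod n → ℕ)

abbrev Cyc (n : ℕ) [NeZero n] (p : ZMod n → ℕ) : Type :=
  {I : Finset (ZMod n) // IsGammaCycle (gam n p) I}

lemma mem_orb {α : Type*} [DecidableEq α] [Fintype α] {f : α → α} {b c : α} :
    c ∈ orb f b ↔ ∃ k, k < Function.minimalPeriod f b ∧ f^[k] b = c := by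
  unfold orb
  simp [Finset.mem_image, Finset.mem_range]

lemma kerN_iter {x : ZMod n → ℚ} (hx : x ∈ LinearMap.ker (Nlin n p)) (a : ZMod n) (k : ℕ) :
    x ((gam n p)^[k] a) = x a := by
  induction k with
  | zero => rfl
  | succ k ih =>
    rw [Function.iterate_succ_apply', ← mem_ker_Nlin.1 hx ((gam n p)^[k] a), ih]

noncomputable def Phi : (LinearMap.ker (Nlin n p)) →ₗ[ℚ] (Cyc n p → ℚ) where
  toFun x := fun I => x.1 I.2.choose
  map_add' x y := rfl
  map_smul' c x := rfl

lemma Phi_injective : Function.Injective (Phi p) := by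
  rw [injective_iff_map_eq_zero]
  intro x hx0
  apply Subtype.ext
  funext a
  show x.1 a = 0
  have h1 : x.1 a = x.1 (ep (gam n p) a) := (kerN_iter p x.2 a _).symm
  set I : Cyc n p := ⟨cyc (gam n p) a, cyc_spec _ a⟩ with hI
  have hspec := I.2.choose_spec
  set b := I.2.choose with hbdef
  have hb1 : b ∈ Function.periodicPts (gam n p) := hspec.1
  have hb2 : (cyc (gam n p) a : Finset (ZMod n)) = orb (gam n p) b := hspec.2
  have hmem : ep (gam n p) a ∈ orb (gam n p) b := by
    rw [← hb2]
    show ep (gam n p) a ∈ orb (gam n p) (ep (gam n p) a)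
    exact mem_orb_self (ep_mem _ a)
  obtain ⟨k, hk, hkeq⟩ := mem_orb.1 hmem
  have h2 : x.1 (ep (gam n p) a) = x.1 b := by
    rw [← hkeq, kerN_iter p x.2 b k]
  have h3 : x.1 b = 0 := congrFun hx0 I
  rw [h1, h2, h3]

lemma Phi_surjective : Function.Surjective (Phi p) := by
  intro v
  set x0 : ZMod n → ℚ := fun a => v ⟨cyc (gam n p) a, cyc_spec _ a⟩ with hx0
  have hker : x0 ∈ LinearMap.ker (Nlin n p) := by
    rw [mem_ker_Nlin]
    intro a
    show v ⟨cyc (gam n p) a, _⟩ = v ⟨cyc (gam n p) (gam n p a), _⟩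
    congr 1
    exact Subtype.ext (cyc_apply (gam n p) a).symm
  refine ⟨⟨x0, hker⟩, ?_⟩
  funext I
  show x0 I.2.choose = v I
  have hspec := I.2.choose_spec
  show v ⟨cyc (gam n p) I.2.choose, _⟩ = v I
  congr 1
  apply Subtype.ext
  show cyc (gam n p) I.2.choose = I.1
  rw [cyc_of_periodic hspec.1]
  exact hspec.2.symm

noncomputable def kerNequiv : (LinearMap.ker (Nlin n p)) ≃ₗ[ℚ] (Cyc n p → ℚ) :=
  LinearEquiv.ofBijective (Phi p) ⟨Phi_injective p, Phi_surjective p⟩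

lemma finrank_kerN : Module.finrank ℚ (LinearMap.ker (Nlin n p)) = Nat.card (Cyc n p) := by
  classical
  haveI : Fintype (Cyc n p) := Fintype.ofFinite _
  rw [(kerNequiv p).finrank_eq, Module.finrank_pi, Nat.card_eq_fintype_card]

lemma cyc_nonempty : Nonempty (Cyc n p) := ⟨⟨cyc (gam n p) 0, cyc_spec _ 0⟩⟩

end
end CartanAux

open CartanAux in
set_option synthInstance.maxHeartbeats 1000000 in
set_option maxHeartbeats 1000000 in
/-- the rank of the Cartan matrix over `ℚ` equals `n` minus the
number of cycles of the resolution quiver plus `1`. -/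
theorem cartan_rank (n : ℕ) [NeZero n] (p : ZMod n → ℕ)
    (hp1 : ∀ a, 1 ≤ p a) (hp2 : ∀ a, p a ≤ p (a + 1) + 1) :
    ((cartanMatrix n p).map (Int.cast : ℤ → ℚ)).rank =
      n - Nat.card {I : Finset (ZMod n) //
            IsGammaCycle (fun a => a + (p a : ZMod n)) I} + 1 := by
  classical
  have hγ : (fun a : ZMod n => a + (p a : ZMod n)) = gam n p := rfl
  rw [hγ]
  have hrank : ((cartanMatrix n p).map (Int.cast : ℤ → ℚ)).rank
      = Module.finrank ℚ (LinearMap.range (Mlin n p)) := rfl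
  rw [hrank]
  set c := Nat.card (Cyc n p) with hc
  have h1 : Module.finrank ℚ (LinearMap.ker (Nlin n p)) = c := finrank_kerN p
  haveI := cyc_nonempty p
  have hc1 : 1 ≤ c := Nat.card_pos
  set f := (Llin n).domRestrict (LinearMap.ker (Nlin n p)) with hf
  have hrange : LinearMap.range f = LinearMap.ker (Mlin n p) := by
    rw [hf, LinearMap.range_domRestrict, ← ker_Mlin_eq hp1]
  have hkerf : Module.finrank ℚ (LinearMap.ker f) = 1 := by
    rw [hf, LinearMap.ker_domRestrict,
      (Submodule.comapSubtypeEquivOfLe (kerL_le_kerN (p := p))).finrank_eq, finrank_kerL]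
  have hrn1 := LinearMap.finrank_range_add_finrank_ker f
  rw [hrange, hkerf, h1] at hrn1
  have hrn2 := LinearMap.finrank_range_add_finrank_ker (Mlin n p)
  have hdim : Module.finrank ℚ (ZMod n → ℚ) = n := by
    rw [Module.finrank_pi, ZMod.card]
  rw [hdim] at hrn2
  have hcn : c ≤ n := by
    have := Submodule.finrank_le (LinearMap.ker (Nlin n p))
    rw [h1, hdim] at this
    exact this
  omega
end

section
/- Let n ≥ 1, let d : ZMod n → ℕ, let t be an indeterminate, and let D be the n×n matrix over ℤ[t] with D(a, a+1) = t^{d(a)} and all other entries 0 (indices in ZMod n). Set d̄ = Σ_a d(a). Then for every k ≥ 1, det(I − D^k) = (1 − t^{d̄·k/gcd(n,k)})^{gcd(n,k)}. -/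
open Polynomial Matrix

/-- The weighted cyclic shift matrix on `ZMod n` over `ℤ[t]`. -/
noncomputable def shiftMatrix (n : ℕ) (d : ZMod n → ℕ) : Matrix (ZMod n) (ZMod n) (Polynomial ℤ) :=
  fun a b => if b = a + 1 then Polynomial.X ^ d a else 0

lemma subRight_pow (m : ℕ) (j : ℕ) (x : ZMod m) :
    ((Equiv.subRight (1 : ZMod m)) ^ j) x = x - j := by
  induction j generalizing x with
  | zero => simp
  | succ j ih =>
    rw [pow_succ, Equiv.Perm.mul_apply, Equiv.subRight_apply, ih]
    push_cast
    ring

lemma isCycle_subRight (m : ℕ) (hm : 2 ≤ m) :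
    Equiv.Perm.IsCycle (Equiv.subRight (1 : ZMod m)) := by
  haveI : NeZero m := ⟨by omega⟩
  haveI : Fact (1 < m) := ⟨by omega⟩
  have h1 : (1 : ZMod m) ≠ 0 := one_ne_zero
  refine ⟨0, ?_, fun y hy => ?_⟩
  · rw [Equiv.subRight_apply, zero_sub]
    exact neg_ne_zero.mpr h1
  refine ⟨((m - y.val : ℕ) : ℤ), ?_⟩
  rw [zpow_natCast, subRight_pow]
  have hyv : y.val ≤ m := le_of_lt (ZMod.val_lt y)
  rw [Nat.cast_sub hyv, ZMod.natCast_self, zero_sub, neg_sub, sub_zero, ZMod.natCast_val,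
    ZMod.cast_id]

lemma support_subRight (m : ℕ) [NeZero m] (hm : 2 ≤ m) :
    Equiv.Perm.support (Equiv.subRight (1 : ZMod m)) = Finset.univ := by
  haveI : Fact (1 < m) := ⟨by omega⟩
  ext x
  simp [Equiv.Perm.mem_support, sub_eq_self]

lemma sign_subRight (m : ℕ) [NeZero m] (hm : 2 ≤ m) :
    Equiv.Perm.sign (Equiv.subRight (1 : ZMod m)) = -(-1) ^ m := by
  rw [(isCycle_subRight m hm).sign, support_subRight m hm, Finset.card_univ, ZMod.card]

lemma cycle_perm_eq (m : ℕ) [NeZero m] (hm : 2 ≤ m) (σ : Equiv.Perm (ZMod m))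
    (H : ∀ i, σ i = i ∨ i = σ i + 1) (hσ : σ ≠ 1) : σ = Equiv.subRight (1 : ZMod m) := by
  haveI : Fact (1 < m) := ⟨by omega⟩
  have h1 : (1 : ZMod m) ≠ 0 := one_ne_zero
  obtain ⟨i₀, hi₀⟩ : ∃ i, σ i ≠ i := by
    by_contra h
    push_neg at h
    exact hσ (Equiv.ext h)
  have hbase : σ i₀ = i₀ - 1 := by
    rcases H i₀ with h | h
    · exact absurd h hi₀
    · exact eq_sub_of_add_eq h.symm
  have key : ∀ j : ℕ, σ (i₀ - j) = i₀ - j - 1 := by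
    intro j
    induction j with
    | zero => simpa using hbase
    | succ j ih =>
      have hx : ((j+1 : ℕ) : ZMod m) = (j : ZMod m) + 1 := by push_cast; ring
      rw [hx, ← sub_sub]
      set x := i₀ - (j : ZMod m) - 1 with hxdef
      rcases H x with h | h
      · exfalso
        have : σ x = σ (i₀ - (j : ZMod m)) := by rw [ih, h]
        have h2 := σ.injective this
        rw [hxdef] at h2
        exact h1 (sub_eq_self.mp h2)
      · exact eq_sub_of_add_eq h.symm
  ext y
  have hy : y = i₀ - ((i₀ - y).val : ℕ) := by
    rw [ZMod.natCast_val, ZMod.cast_id]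
    ring
  rw [Equiv.subRight_apply, hy, key]

lemma det_one_sub_cycle {R : Type*} [CommRing R] (m : ℕ) [NeZero m] (w : ZMod m → R) :
    (1 - Matrix.of (fun a b : ZMod m => if b = a + 1 then w a else 0)).det
      = 1 - ∏ a, w a := by
  set M : Matrix (ZMod m) (ZMod m) R :=
    1 - Matrix.of (fun a b : ZMod m => if b = a + 1 then w a else 0) with hM
  rcases eq_or_lt_of_le (Nat.one_le_iff_ne_zero.mpr (NeZero.ne m)) with h1 | hm
  · haveI : Subsingleton (ZMod m) := by
      apply Fintype.card_le_one_iff_subsingleton.mp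
      rw [ZMod.card, ← h1]
    haveI : Unique (ZMod m) := uniqueOfSubsingleton 0
    rw [Matrix.det_unique]
    have hd : (default : ZMod m) = default + 1 := Subsingleton.elim _ _
    have hMd : M default default = 1 - w default := by
      rw [hM, Matrix.sub_apply, Matrix.one_apply_eq, Matrix.of_apply, if_pos hd]
    rw [Fintype.prod_unique]
    convert hMd using 3
  · have hm2 : 2 ≤ m := hm
    haveI : Fact (1 < m) := ⟨hm⟩
    set σc := Equiv.subRight (1 : ZMod m) with hσc
    have hne : (1 : Equiv.Perm (ZMod m)) ≠ σc := by
      intro h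
      have h0 := Equiv.ext_iff.mp h 0
      rw [Equiv.Perm.one_apply, Equiv.subRight_apply, zero_sub] at h0
      exact one_ne_zero (neg_eq_zero.mp h0.symm)
    have hz : ∀ σ ∈ (Finset.univ : Finset (Equiv.Perm (ZMod m))), σ ≠ 1 ∧ σ ≠ σc →
        Equiv.Perm.sign σ • ∏ i, M (σ i) i = 0 := by
      rintro σ - ⟨hσ1, hσ2⟩
      have hex : ∃ i, ¬(σ i = i ∨ i = σ i + 1) := by
        by_contra h
        push_neg at h
        refine hσ2 (cycle_perm_eq m hm2 σ (fun i => ?_) hσ1)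
        have := h i
        tauto
      obtain ⟨i, hi⟩ := hex
      push_neg at hi
      have h0 : M (σ i) i = 0 := by
        simp [hM, Matrix.sub_apply, Matrix.one_apply, hi.1, hi.2]
      have hp : ∏ j : ZMod m, M (σ j) j = 0 :=
        Finset.prod_eq_zero (f := fun j => M (σ j) j) (Finset.mem_univ i) h0
      rw [hp, smul_zero]
    rw [Matrix.det_apply, Finset.sum_eq_add_of_mem 1 σc (Finset.mem_univ _) (Finset.mem_univ _)
      hne hz]
    have hterm1 : (Equiv.Perm.sign (1 : Equiv.Perm (ZMod m))) •
        ∏ i, M ((1 : Equiv.Perm (ZMod m)) i) i = 1 := by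
      have hd : ∀ i : ZMod m, M i i = 1 := by
        intro i
        have : ¬(i = i + 1) := by simp
        simp [hM, Matrix.sub_apply, Matrix.one_apply, this]
      simp [hd]
    have hprod2 : ∏ i : ZMod m, M (σc i) i = (-1 : R) ^ m * ∏ a, w a := by
      have he : ∀ i : ZMod m, M (σc i) i = -1 * w (i - 1) := by
        intro i
        have h1' : ¬(i - 1 = i) := by simp [sub_eq_self]
        have h2' : i = i - 1 + 1 := by ring
        simp [hM, hσc, Matrix.sub_apply, Matrix.one_apply, h1', ← h2', if_pos h2'.symm]
      rw [Finset.prod_congr rfl (fun i _ => he i), Finset.prod_mul_distrib,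
        Finset.prod_const, Finset.card_univ, ZMod.card]
      congr 1
      exact Fintype.prod_equiv (Equiv.subRight (1 : ZMod m)) (fun i => w (i - 1)) w
        (fun i => rfl)
    have hterm2 : (Equiv.Perm.sign σc) • ∏ i, M (σc i) i = -∏ a, w a := by
      rw [hprod2, hσc, sign_subRight m hm2]
      rcases Nat.even_or_odd m with hpar | hpar
      · simp [hpar.neg_one_pow]
      · simp [hpar.neg_one_pow]
    rw [hterm1, hterm2]
    ring

lemma shiftMatrix_pow (n : ℕ) [NeZero n] (d : ZMod n → ℕ) (k : ℕ) :
    (shiftMatrix n d) ^ k = Matrix.of (fun a b : ZMod n =>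
      if b = a + (k : ZMod n) then Polynomial.X ^ (∑ i ∈ Finset.range k, d (a + i)) else 0) := by
  induction k with
  | zero =>
    ext a b
    simp only [pow_zero, Matrix.one_apply, Matrix.of_apply, Nat.cast_zero, add_zero,
      Finset.range_zero, Finset.sum_empty, pow_zero]
    by_cases h : a = b <;> simp [h, eq_comm]
  | succ k ih =>
    ext a b
    rw [pow_succ, ih]
    rw [Matrix.mul_apply]
    have hsum : ∀ c : ZMod n, (Matrix.of (fun a b : ZMod n =>
        if b = a + (k : ZMod n) then Polynomial.X ^ (∑ i ∈ Finset.range k, d (a + i)) else 0)) a c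
        * shiftMatrix n d c b
        = if c = a + (k : ZMod n) then
            (Polynomial.X ^ (∑ i ∈ Finset.range k, d (a + i)) * shiftMatrix n d (a + k) b)
          else 0 := by
      intro c
      by_cases h : c = a + (k : ZMod n) <;> simp [h]
    rw [Finset.sum_congr rfl (fun c _ => hsum c), Finset.sum_ite_eq' Finset.univ
      (a + (k : ZMod n)) _]
    simp only [Finset.mem_univ, if_true]
    unfold shiftMatrix
    by_cases h : b = a + (k : ZMod n) + 1
    · rw [if_pos h, Matrix.of_apply, if_pos (by rw [h]; push_cast; ring)]
      rw [← pow_add, Finset.sum_range_succ]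
    · rw [if_neg h, Matrix.of_apply, if_neg (by intro hc; apply h; rw [hc]; push_cast; ring),
        mul_zero]

/-- The reindexing map. -/
def cycE (n k : ℕ) : ZMod (n / Nat.gcd n k) × ZMod (Nat.gcd n k) → ZMod n :=
  fun p => ((p.2.val + p.1.val * k : ℕ) : ZMod n)

section CycE
variable (n k : ℕ) [NeZero n] (hk : 0 < k)

lemma gcd_pos' : 0 < Nat.gcd n k := Nat.gcd_pos_of_pos_left k (Nat.pos_of_ne_zero (NeZero.ne n))

lemma mdiv_pos' : 0 < n / Nat.gcd n k :=
  Nat.div_pos (Nat.le_of_dvd (Nat.pos_of_ne_zero (NeZero.ne n)) (Nat.gcd_dvd_left n k))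
    (gcd_pos' n k)

lemma cycE_injective : Function.Injective (cycE n k) := by
  haveI : NeZero (Nat.gcd n k) := ⟨(gcd_pos' n k).ne'⟩
  haveI : NeZero (n / Nat.gcd n k) := ⟨(mdiv_pos' n k).ne'⟩
  rintro ⟨j, r⟩ ⟨j', r'⟩ h
  unfold cycE at h
  dsimp only at h
  rw [ZMod.natCast_eq_natCast_iff] at h
  have hgk : Nat.gcd n k ∣ k := Nat.gcd_dvd_right n k
  have hgn : Nat.gcd n k ∣ n := Nat.gcd_dvd_left n k
  have hmodg : r.val ≡ r'.val [MOD Nat.gcd n k] := by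
    have h2 : r.val + j.val * k ≡ r'.val + j'.val * k [MOD Nat.gcd n k] := h.of_dvd hgn
    have h3 : ∀ jv : ℕ, jv * k ≡ 0 [MOD Nat.gcd n k] :=
      fun jv => Nat.modEq_zero_iff_dvd.mpr (Dvd.dvd.mul_left hgk jv)
    calc r.val ≡ r.val + j.val * k [MOD Nat.gcd n k] := by
          simpa using (Nat.ModEq.refl r.val).add (h3 j.val).symm
      _ ≡ r'.val + j'.val * k [MOD Nat.gcd n k] := h2
      _ ≡ r'.val [MOD Nat.gcd n k] := by simpa using (Nat.ModEq.refl r'.val).add (h3 j'.val)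
  have hr : r = r' := by
    apply ZMod.val_injective
    rw [Nat.ModEq] at hmodg
    rwa [Nat.mod_eq_of_lt (ZMod.val_lt r), Nat.mod_eq_of_lt (ZMod.val_lt r')] at hmodg
  subst hr
  have h4 : j.val * k ≡ j'.val * k [MOD n] := Nat.ModEq.add_left_cancel' _ h
  have h5 : j.val ≡ j'.val [MOD n / Nat.gcd n k] :=
    h4.cancel_right_div_gcd (Nat.pos_of_ne_zero (NeZero.ne n))
  have hj : j = j' := by
    apply ZMod.val_injective
    rw [Nat.ModEq] at h5
    rwa [Nat.mod_eq_of_lt (ZMod.val_lt j), Nat.mod_eq_of_lt (ZMod.val_lt j')] at h5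
  rw [hj]

lemma cycE_bijective : Function.Bijective (cycE n k) := by
  haveI : NeZero (Nat.gcd n k) := ⟨(gcd_pos' n k).ne'⟩
  haveI : NeZero (n / Nat.gcd n k) := ⟨(mdiv_pos' n k).ne'⟩
  rw [Fintype.bijective_iff_injective_and_card]
  refine ⟨cycE_injective n k, ?_⟩
  rw [Fintype.card_prod, ZMod.card, ZMod.card, ZMod.card, Nat.div_mul_cancel (Nat.gcd_dvd_left n k)]

lemma cycE_step (j : ZMod (n / Nat.gcd n k)) (r : ZMod (Nat.gcd n k)) :
    cycE n k (j + 1, r) = cycE n k (j, r) + (k : ZMod n) := by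
  haveI : NeZero (Nat.gcd n k) := ⟨(gcd_pos' n k).ne'⟩
  haveI : NeZero (n / Nat.gcd n k) := ⟨(mdiv_pos' n k).ne'⟩
  have h1 : (j + 1).val ≡ j.val + 1 [MOD n / Nat.gcd n k] := by
    rw [← ZMod.natCast_eq_natCast_iff]
    rw [ZMod.natCast_val, ZMod.cast_id]
    push_cast
    rw [ZMod.natCast_val, ZMod.cast_id]
  have h2 : (j + 1).val * k ≡ (j.val + 1) * k [MOD (n / Nat.gcd n k) * k] := h1.mul_right' k
  have hnd : n ∣ (n / Nat.gcd n k) * k := by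
    have heq : (n / Nat.gcd n k) * k = n * (k / Nat.gcd n k) := by
      calc (n / Nat.gcd n k) * k
          = (n / Nat.gcd n k) * (Nat.gcd n k * (k / Nat.gcd n k)) := by
            rw [Nat.mul_div_cancel' (Nat.gcd_dvd_right n k)]
        _ = ((n / Nat.gcd n k) * Nat.gcd n k) * (k / Nat.gcd n k) := by ring
        _ = n * (k / Nat.gcd n k) := by rw [Nat.div_mul_cancel (Nat.gcd_dvd_left n k)]
    rw [heq]
    exact Dvd.intro _ rfl
  have h3 : (j + 1).val * k ≡ (j.val + 1) * k [MOD n] := h2.of_dvd hnd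
  have h4 : (((j+1).val * k : ℕ) : ZMod n) = (((j.val + 1) * k : ℕ) : ZMod n) :=
    (ZMod.natCast_eq_natCast_iff _ _ _).mpr h3
  show ((r.val + (j+1).val * k : ℕ) : ZMod n) = ((r.val + j.val * k : ℕ) : ZMod n) + (k : ZMod n)
  push_cast at h4 ⊢
  rw [h4]
  ring
end CycE

lemma sum_range_mul' {M : Type*} [AddCommMonoid M] (f : ℕ → M) (Q G : ℕ) :
    ∑ i ∈ Finset.range (Q * G), f i
      = ∑ q ∈ Finset.range Q, ∑ u ∈ Finset.range G, f (q * G + u) := by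
  induction Q with
  | zero => simp
  | succ Q ih => rw [Nat.succ_mul, Finset.sum_range_add, ih, Finset.sum_range_succ]

lemma count_lemma (n k : ℕ) [NeZero n] [NeZero (Nat.gcd n k)] [NeZero (n / Nat.gcd n k)]
    (d : ZMod n → ℕ) (r : ZMod (Nat.gcd n k)) :
    ∑ j : ZMod (n / Nat.gcd n k), ∑ i ∈ Finset.range k, d (cycE n k (j, r) + (i : ZMod n))
      = (∑ a, d a) * (k / Nat.gcd n k) := by
  have hkg : k = (k / Nat.gcd n k) * Nat.gcd n k :=
    (Nat.div_mul_cancel (Nat.gcd_dvd_right n k)).symm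
  have hrange : Finset.range k = Finset.range ((k / Nat.gcd n k) * Nat.gcd n k) := by
    rw [← hkg]
  have inner : ∀ c : ZMod n,
      ∑ j : ZMod (n / Nat.gcd n k), ∑ u ∈ Finset.range (Nat.gcd n k),
        d (c + ((u + j.val * k : ℕ) : ZMod n)) = ∑ a, d a := by
    intro c
    have h1 : ∀ j : ZMod (n / Nat.gcd n k),
        ∑ u ∈ Finset.range (Nat.gcd n k), d (c + ((u + j.val * k : ℕ) : ZMod n))
          = ∑ ρ : ZMod (Nat.gcd n k), d (c + cycE n k (j, ρ)) := by
      intro j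
      refine Finset.sum_nbij' (fun u => ((u : ℕ) : ZMod (Nat.gcd n k))) (fun ρ => ρ.val)
        (fun u _ => Finset.mem_univ _) (fun ρ _ => Finset.mem_range.mpr (ZMod.val_lt ρ))
        (fun u hu => ZMod.val_cast_of_lt (Finset.mem_range.mp hu))
        (fun ρ _ => ZMod.natCast_rightInverse ρ) (fun u hu => ?_)
      show d (c + ((u + j.val * k : ℕ) : ZMod n))
        = d (c + (((((u : ℕ) : ZMod (Nat.gcd n k))).val + j.val * k : ℕ) : ZMod n))
      rw [ZMod.val_cast_of_lt (Finset.mem_range.mp hu)]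
    have h2 : ∑ p : ZMod (n / Nat.gcd n k) × ZMod (Nat.gcd n k), d (c + cycE n k p)
        = ∑ b : ZMod n, d (c + b) :=
      Fintype.sum_bijective (cycE n k) (cycE_bijective n k)
        (fun p => d (c + cycE n k p)) (fun b => d (c + b)) (fun p => rfl)
    have h3 := Fintype.sum_prod_type
      (f := fun p : ZMod (n / Nat.gcd n k) × ZMod (Nat.gcd n k) => d (c + cycE n k p))
    calc ∑ j : ZMod (n / Nat.gcd n k), ∑ u ∈ Finset.range (Nat.gcd n k),
          d (c + ((u + j.val * k : ℕ) : ZMod n))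
        = ∑ j : ZMod (n / Nat.gcd n k), ∑ ρ : ZMod (Nat.gcd n k), d (c + cycE n k (j, ρ)) :=
          Finset.sum_congr rfl (fun j _ => h1 j)
      _ = ∑ p : ZMod (n / Nat.gcd n k) × ZMod (Nat.gcd n k), d (c + cycE n k p) := h3.symm
      _ = ∑ b : ZMod n, d (c + b) := h2
      _ = ∑ a, d a := Fintype.sum_equiv (Equiv.addLeft c) (fun b => d (c + b)) d (fun b => rfl)
  have hmatch : ∀ (q : ℕ) (j : ZMod (n / Nat.gcd n k)) (u : ℕ),
      d (cycE n k (j, r) + ((q * Nat.gcd n k + u : ℕ) : ZMod n))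
        = d (((r.val + q * Nat.gcd n k : ℕ) : ZMod n) + ((u + j.val * k : ℕ) : ZMod n)) := by
    intro q j u
    congr 1
    show ((r.val + j.val * k : ℕ) : ZMod n) + _ = _
    push_cast
    ring
  calc ∑ j : ZMod (n / Nat.gcd n k), ∑ i ∈ Finset.range k, d (cycE n k (j, r) + (i : ZMod n))
      = ∑ j : ZMod (n / Nat.gcd n k), ∑ q ∈ Finset.range (k / Nat.gcd n k),
          ∑ u ∈ Finset.range (Nat.gcd n k),
            d (cycE n k (j, r) + ((q * Nat.gcd n k + u : ℕ) : ZMod n)) := by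
        refine Finset.sum_congr rfl (fun j _ => ?_)
        rw [hrange]
        exact sum_range_mul' (fun i => d (cycE n k (j, r) + (i : ZMod n))) _ _
    _ = ∑ q ∈ Finset.range (k / Nat.gcd n k), ∑ j : ZMod (n / Nat.gcd n k),
          ∑ u ∈ Finset.range (Nat.gcd n k),
            d (cycE n k (j, r) + ((q * Nat.gcd n k + u : ℕ) : ZMod n)) := Finset.sum_comm
    _ = ∑ q ∈ Finset.range (k / Nat.gcd n k), ∑ a, d a := by
        refine Finset.sum_congr rfl (fun q _ => ?_)
        rw [Finset.sum_congr rfl (fun j _ => Finset.sum_congr rfl (fun u _ => hmatch q j u))]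
        exact inner _
    _ = (∑ a, d a) * (k / Nat.gcd n k) := by
        rw [Finset.sum_const, Finset.card_range, smul_eq_mul, mul_comm]

/-- `det (I - D^k) = (1 - t^{d̄·k/gcd(n,k)})^{gcd(n,k)}`. -/
theorem det_one_sub_shift_pow (n : ℕ) [NeZero n] (d : ZMod n → ℕ)
    (k : ℕ) (hk : 1 ≤ k) :
    (1 - (shiftMatrix n d) ^ k).det =
      (1 - Polynomial.X ^ ((∑ a, d a) * k / Nat.gcd n k)) ^ Nat.gcd n k := by
  haveI : NeZero (Nat.gcd n k) := ⟨(gcd_pos' n k).ne'⟩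
  haveI : NeZero (n / Nat.gcd n k) := ⟨(mdiv_pos' n k).ne'⟩
  have ebij := cycE_bijective n k
  set eqv : (ZMod (n / Nat.gcd n k) × ZMod (Nat.gcd n k)) ≃ ZMod n :=
    Equiv.ofBijective _ ebij with heqv
  set W : ZMod (Nat.gcd n k) →
      Matrix (ZMod (n / Nat.gcd n k)) (ZMod (n / Nat.gcd n k)) (Polynomial ℤ) :=
    fun r => Matrix.of (fun j j' => if j' = j + 1 then
      Polynomial.X ^ (∑ i ∈ Finset.range k, d (cycE n k (j, r) + (i : ZMod n))) else 0) with hW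
  have hsub : ((shiftMatrix n d) ^ k).submatrix (cycE n k) (cycE n k)
      = Matrix.blockDiagonal W := by
    apply Matrix.ext
    rintro ⟨j, r⟩ ⟨j', r'⟩
    rw [Matrix.submatrix_apply, shiftMatrix_pow, Matrix.of_apply, Matrix.blockDiagonal_apply]
    simp only [hW, Matrix.of_apply]
    have hiff : cycE n k (j', r') = cycE n k (j, r) + ((k : ℕ) : ZMod n)
        ↔ (r = r' ∧ j' = j + 1) := by
      constructor
      · intro h
        have h1 : cycE n k (j', r') = cycE n k (j + 1, r) := by rw [h, cycE_step]
        have h2 := cycE_injective n k h1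
        obtain ⟨h3, h4⟩ := Prod.ext_iff.mp h2
        exact ⟨h4.symm, h3⟩
      · rintro ⟨rfl, rfl⟩
        rw [cycE_step]
    by_cases hr : r = r'
    · subst hr
      by_cases hj : j' = j + 1
      · subst hj
        rw [if_pos (hiff.mpr ⟨rfl, rfl⟩), if_pos rfl, if_pos rfl]
      · rw [if_neg (fun hc => hj (hiff.mp hc).2), if_pos rfl, if_neg hj]
    · rw [if_neg (fun hc => hr (hiff.mp hc).1), if_neg hr]
  have hsub2 : (1 - (shiftMatrix n d) ^ k).submatrix eqv eqv
      = Matrix.blockDiagonal (fun r => 1 - W r) := by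
    have hcoe : ⇑eqv = cycE n k := rfl
    calc (1 - (shiftMatrix n d) ^ k).submatrix eqv eqv
        = (1 : Matrix (ZMod n) (ZMod n) (Polynomial ℤ)).submatrix eqv eqv
            - ((shiftMatrix n d) ^ k).submatrix eqv eqv := rfl
      _ = 1 - Matrix.blockDiagonal W := by
          rw [Matrix.submatrix_one_equiv, hcoe, hsub]
      _ = Matrix.blockDiagonal (fun r => 1 - W r) := by
          have h9 : (fun r => 1 - W r)
              = ((1 : ZMod (Nat.gcd n k) → Matrix (ZMod (n / Nat.gcd n k))
                  (ZMod (n / Nat.gcd n k)) (Polynomial ℤ)) - W) := rfl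
          rw [h9, Matrix.blockDiagonal_sub, Matrix.blockDiagonal_one]
  have hblock : ∀ r : ZMod (Nat.gcd n k),
      (1 - W r).det = 1 - Polynomial.X ^ ((∑ a, d a) * (k / Nat.gcd n k)) := by
    intro r
    rw [hW]
    rw [det_one_sub_cycle (n / Nat.gcd n k)
      (fun j => Polynomial.X ^ (∑ i ∈ Finset.range k, d (cycE n k (j, r) + (i : ZMod n))))]
    rw [Finset.prod_pow_eq_pow_sum, count_lemma]
  calc (1 - (shiftMatrix n d) ^ k).det
      = ((1 - (shiftMatrix n d) ^ k).submatrix eqv eqv).det :=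
        (Matrix.det_submatrix_equiv_self eqv _).symm
    _ = ∏ r : ZMod (Nat.gcd n k), (1 - W r).det := by
        rw [hsub2, Matrix.det_blockDiagonal]
    _ = ∏ r : ZMod (Nat.gcd n k), (1 - Polynomial.X ^ ((∑ a, d a) * (k / Nat.gcd n k))) :=
        Finset.prod_congr rfl (fun r _ => hblock r)
    _ = (1 - Polynomial.X ^ ((∑ a, d a) * (k / Nat.gcd n k))) ^ Nat.gcd n k := by
        rw [Finset.prod_const, Finset.card_univ, ZMod.card]
    _ = (1 - Polynomial.X ^ ((∑ a, d a) * k / Nat.gcd n k)) ^ Nat.gcd n k := by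
        rw [Nat.mul_div_assoc _ (Nat.gcd_dvd_right n k)]
end

section
/- Let n, ℓ ≥ 1, let d : ZMod n → ℕ with d̄ = Σ_a d(a), and let D be the n×n matrix over ℤ[t] with D(a,a+1) = t^{d(a)} and 0 elsewhere. Let C = I + D + D² + ⋯ + D^{ℓ−1} (the graded Cartan matrix of the selfinjective Nakayama algebra kΔ_n/rad^ℓ with grading d). Then (1 − t^{d̄}) · det C = (1 − t^{d̄·ℓ/gcd(n,ℓ)})^{gcd(n,ℓ)} in ℤ[t]. -/
/-!
Since `(1 - D) * ∑_{i<ℓ} D^i = 1 - D^ℓ`, it suffices to compute `det (1 - D)` and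
`det (1 - D^ℓ)`. For a weighted cyclic shift `W` one has `det (1 - W) = 1 - ∏ weights`:
only the identity and the rotation contribute to the Leibniz expansion. The power `D^ℓ` is
the shift by `ℓ`, weighted by `t` to the sums of `d` over windows of length `ℓ`. Listing
`ZMod n` along the `g = gcd(n, ℓ)` orbits `{r + ℓ j}` of `a ↦ a + ℓ`, each of length `n / g`,
makes `1 - D^ℓ` block diagonal with blocks `1 - (weighted cyclic shift)`. Every orbit has
weight `t^(d̄ ℓ / g)`, since the windows starting on one orbit cover each point of `ZMod n`
exactly `ℓ / g` times.
-/

open Polynomial Matrix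

open Finset Equiv

section WeightedShift

variable {G R : Type*} [Fintype G] [DecidableEq G]

def weightedShift [Add G] [Zero R] (s : G) (w : G → R) : Matrix G G R :=
  fun a b => if b = a + s then w a else 0

theorem weightedShift_mul [AddSemigroup G] [NonUnitalNonAssocSemiring R] (s t : G)
    (v w : G → R) :
    weightedShift s v * weightedShift t w = weightedShift (s + t) fun a => v a * w (a + s) := by
  ext a b
  simp only [weightedShift, Matrix.mul_apply, ite_mul, mul_ite, zero_mul, mul_zero]
  rw [sum_eq_single (a + s) (fun j _ hj => by simp [hj]) (by simp)]
  simp [add_assoc]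

theorem weightedShift_one_pow [AddMonoidWithOne G] [CommSemiring R] (w : G → R) (k : ℕ) :
    weightedShift 1 w ^ k = weightedShift (k : G) fun a => ∏ j ∈ range k, w (a + j) := by
  induction k with
  | zero =>
    ext a b
    simp [weightedShift, Matrix.one_apply, eq_comm]
  | succ k ih =>
    rw [pow_succ, ih, weightedShift_mul]
    simp [prod_range_succ]

end WeightedShift

-- Comparing `∑ σ i` with `∑ i` shows that the number of moved points is divisible by `m`.
theorem ZMod.perm_eq_one_or_eq_inv_addRight_one {m : ℕ} [NeZero m] (σ : Perm (ZMod m))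
    (hσ : ∀ i, σ i = i ∨ σ i + 1 = i) : σ = 1 ∨ σ = (Equiv.addRight 1)⁻¹ := by
  set S := univ.filter fun i => σ i ≠ i
  have hstep : ∀ i, σ i + (if σ i ≠ i then 1 else 0) = i := fun i => by
    by_cases h : σ i = i <;> simp [h, (hσ i).resolve_left]
  have hS : ((#S : ℕ) : ZMod m) = 0 := by
    have := sum_congr rfl fun i (_ : i ∈ univ) => hstep i
    rwa [sum_add_distrib, Equiv.sum_comp σ (fun i => i), add_eq_left, sum_boole] at this
  obtain hS | hS : #S = 0 ∨ #S = Fintype.card (ZMod m) := by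
    have := card_le_univ S
    rw [ZMod.card] at this ⊢
    obtain ⟨c, hc⟩ := (ZMod.natCast_eq_zero_iff _ _).mp hS
    rcases c with _ | _ | c <;> [left; right; exfalso] <;> nlinarith [NeZero.pos m]
  · left
    ext i
    simp only [S, card_eq_zero, filter_eq_empty_iff, mem_univ, not_not, true_imp_iff] at hS
    exact hS (x := i)
  · right
    ext i
    rw [← card_univ, card_filter_eq_iff] at hS
    rw [Perm.eq_inv_iff_eq]
    exact (hσ i).resolve_left (hS i (mem_univ i))

theorem ZMod.sign_addRight_one (m : ℕ) [NeZero m] :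
    Perm.sign (Equiv.addRight (1 : ZMod m)) = (-1) ^ (m - 1) := by
  obtain ⟨k, rfl⟩ := Nat.exists_eq_succ_of_ne_zero (NeZero.ne m)
  rw [← sign_finRotate]
  congr
  ext i
  exact (finRotate_apply (i : Fin (k + 1))).symm

theorem det_one_sub_weightedShift_one {R : Type*} [CommRing R] {m : ℕ} [NeZero m]
    (w : ZMod m → R) : (1 - weightedShift (1 : ZMod m) w).det = 1 - ∏ a, w a := by
  obtain ⟨k, rfl⟩ := Nat.exists_eq_succ_of_ne_zero (NeZero.ne m)
  rcases k with _ | k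
  · simp [Matrix.det_unique, weightedShift, Subsingleton.elim (1 : ZMod 1) 0]
  have : Fact (1 < k + 2) := ⟨by omega⟩
  set c := Equiv.addRight (1 : ZMod (k + 2))
  have hentry : ∀ a b, (1 - weightedShift 1 w) a b =
      (if a = b then 1 else 0) - if b = a + 1 then w a else 0 := fun a b => by
    simp [weightedShift, Matrix.one_apply]
  have hc : 1 ≠ c⁻¹ := fun h => by simpa [c] using Perm.ext_iff.mp h 0
  rw [det_apply, Fintype.sum_eq_add 1 c⁻¹ hc ?_]
  · have hid : ∏ i, (1 - weightedShift 1 w) ((1 : Perm (ZMod (k + 2))) i) i = 1 :=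
      prod_eq_one fun i _ => by simp [hentry]
    have hrot : ∏ i, (1 - weightedShift 1 w) (c⁻¹ i) i = (-1) ^ (k + 2) * ∏ a, w a := calc
      _ = ∏ i, -w (c⁻¹ i) := prod_congr rfl fun i _ => by simp [hentry, c]
      _ = _ := by rw [prod_neg, card_univ, ZMod.card, Equiv.prod_comp]
    rw [hid, hrot, Perm.sign_inv, ZMod.sign_addRight_one]
    have hsign : (-1 : R) ^ (k + 1) * (-1) ^ (k + 2) = -1 := by
      rw [← pow_add]
      exact Odd.neg_one_pow ⟨k + 1, by ring⟩
    simp only [Units.smul_def, Perm.sign_one, one_smul]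
    push_cast
    linear_combination (∏ a, w a) * hsign
  · rintro σ ⟨hσ1, hσc⟩
    obtain ⟨i, hi⟩ : ∃ i, σ i ≠ i ∧ σ i + 1 ≠ i := by
      by_contra! h
      exact (ZMod.perm_eq_one_or_eq_inv_addRight_one σ
        fun i => or_iff_not_imp_left.2 (h i)).elim hσ1 hσc
    rw [prod_eq_zero (mem_univ i) (by simp [hentry, hi.1, hi.2.symm]), smul_zero]

theorem det_one_sub_weightedShift_of_equiv {G R ι : Type*} [Add G] [Fintype G] [DecidableEq G]
    [CommRing R] [Fintype ι] [DecidableEq ι] {m : ℕ} [NeZero m] (s : G) (w : G → R)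
    (e : ZMod m × ι ≃ G) (he : ∀ j r, e (j + 1, r) = e (j, r) + s) :
    (1 - weightedShift s w).det = ∏ r, (1 - ∏ j, w (e (j, r))) := by
  have hblock : (1 - weightedShift s w).submatrix e e =
      blockDiagonal fun r => 1 - weightedShift 1 fun j => w (e (j, r)) := by
    ext ⟨j, r⟩ ⟨j', r'⟩
    by_cases hr : r = r'
    · subst hr
      simp [weightedShift, one_apply, ← he]
    · simp [blockDiagonal_apply_ne _ _ _ hr, weightedShift, one_apply, ← he, hr, Ne.symm hr]
  rw [← det_submatrix_equiv_self e, hblock, det_blockDiagonal]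
  exact prod_congr rfl fun r _ => det_one_sub_weightedShift_one _

theorem ZMod.natCast_gcd_eq_gcdB_mul (n ℓ : ℕ) :
    ((n.gcd ℓ : ℕ) : ZMod n) = n.gcdB ℓ * ℓ := by
  have hbez := congrArg (fun z : ℤ => (z : ZMod n)) (Nat.gcd_eq_gcd_ab n ℓ)
  push_cast at hbez
  rw [hbez, ZMod.natCast_self, zero_mul, zero_add, mul_comm]

theorem Function.Periodic.sum_range_mul {M : Type*} [AddCommMonoid M] {h : ℕ → M} {c : ℕ}
    (hp : Function.Periodic h c) (q : ℕ) :
    ∑ k ∈ range (q * c), h k = q • ∑ k ∈ range c, h k := by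
  induction q with
  | zero => simp
  | succ q ih =>
    rw [add_mul, one_mul, sum_range_add, ih, succ_nsmul]
    congr 1
    exact sum_congr rfl fun k _ => by rw [add_comm]; exact hp.nat_mul q k

section Stride

variable (n ℓ : ℕ)

def strideHom : ZMod (n / n.gcd ℓ) →+ ZMod n :=
  ZMod.lift _ ⟨(AddMonoidHom.mulRight (ℓ : ZMod n)).comp (Int.castAddHom (ZMod n)), by
    obtain ⟨q, hq⟩ := Nat.gcd_dvd_right n ℓ
    have hcancel : n / n.gcd ℓ * ℓ = n * q := calc
      _ = n / n.gcd ℓ * n.gcd ℓ * q := by rw [mul_assoc, ← hq]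
      _ = n * q := by rw [Nat.div_mul_cancel (Nat.gcd_dvd_left n ℓ)]
    simp only [AddMonoidHom.comp_apply, Int.coe_castAddHom, AddMonoidHom.mulRight_apply,
      Int.cast_natCast]
    rw [← Nat.cast_mul, hcancel, Nat.cast_mul, ZMod.natCast_self, zero_mul]⟩

theorem strideHom_intCast (z : ℤ) : strideHom n ℓ z = z * ℓ :=
  ZMod.lift_coe _ _ z

theorem strideHom_one : strideHom n ℓ 1 = ℓ := by
  simpa using strideHom_intCast n ℓ 1

variable [NeZero n]

instance : NeZero (n / n.gcd ℓ) :=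
  ⟨(Nat.div_pos (Nat.gcd_le_left ℓ (NeZero.pos n))
    (Nat.gcd_pos_of_pos_left ℓ (NeZero.pos n))).ne'⟩

theorem strideHom_add_surjective :
    Function.Surjective fun p : ZMod (n / n.gcd ℓ) × Fin (n.gcd ℓ) =>
      strideHom n ℓ p.1 + p.2 := by
  intro x
  have hg : 0 < n.gcd ℓ := Nat.gcd_pos_of_pos_left ℓ (NeZero.pos n)
  set u := x.val / n.gcd ℓ with hu
  refine ⟨(((n.gcdB ℓ * u : ℤ) : ZMod _), ⟨x.val % n.gcd ℓ, Nat.mod_lt _ hg⟩), ?_⟩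
  calc strideHom n ℓ ((n.gcdB ℓ * u : ℤ) : ZMod _) + ((x.val % n.gcd ℓ : ℕ) : ZMod n)
      = ((u * n.gcd ℓ + x.val % n.gcd ℓ : ℕ) : ZMod n) := by
        rw [strideHom_intCast, Nat.cast_add, Nat.cast_mul, ZMod.natCast_gcd_eq_gcdB_mul]
        simp only [Int.cast_mul, Int.cast_natCast]
        ring
    _ = x := by rw [hu, Nat.div_add_mod', ZMod.natCast_zmod_val]

noncomputable def strideEquiv : ZMod (n / n.gcd ℓ) × Fin (n.gcd ℓ) ≃ ZMod n :=
  Equiv.ofBijective _ <| (Fintype.bijective_iff_surjective_and_card _).2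
    ⟨strideHom_add_surjective n ℓ, by
      simp [ZMod.card, Nat.div_mul_cancel (Nat.gcd_dvd_left n ℓ)]⟩

theorem strideEquiv_apply (j : ZMod (n / n.gcd ℓ)) (r : Fin (n.gcd ℓ)) :
    strideEquiv n ℓ (j, r) = strideHom n ℓ j + r :=
  rfl

theorem strideEquiv_add_one (j : ZMod (n / n.gcd ℓ)) (r : Fin (n.gcd ℓ)) :
    strideEquiv n ℓ (j + 1, r) = strideEquiv n ℓ (j, r) + ℓ := by
  rw [strideEquiv_apply, strideEquiv_apply, map_add, strideHom_one, add_right_comm]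

theorem sum_sum_range_strideEquiv {M : Type*} [AddCommMonoid M] (f : ZMod n → M)
    (r : Fin (n.gcd ℓ)) :
    ∑ j, ∑ k ∈ range ℓ, f (strideEquiv n ℓ (j, r) + k) =
      (ℓ / n.gcd ℓ) • ∑ x, f x := by
  set F : ZMod n → M := fun y => ∑ j, f (strideHom n ℓ j + y)
  have hFℓ : Function.Periodic F ℓ := fun y => calc
    F (y + ℓ) = ∑ j, f (strideHom n ℓ (j + 1) + y) :=
      sum_congr rfl fun j _ => by rw [map_add, strideHom_one, add_right_comm, add_assoc]
    _ = F y := Equiv.sum_comp (Equiv.addRight 1) fun j => f (strideHom n ℓ j + y)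
  have hFg : Function.Periodic F (n.gcd ℓ) := by
    rw [ZMod.natCast_gcd_eq_gcdB_mul]
    exact hFℓ.int_mul _
  have hwindow := Function.Periodic.sum_range_mul (h := fun k => F (r + k)) (c := n.gcd ℓ)
    (fun k => by simp only [Nat.cast_add, ← add_assoc]; exact hFg _) (ℓ / n.gcd ℓ)
  rw [Nat.div_mul_cancel (Nat.gcd_dvd_right n ℓ)] at hwindow
  calc ∑ j, ∑ k ∈ range ℓ, f (strideEquiv n ℓ (j, r) + k)
      = ∑ k ∈ range ℓ, F (r + k) := by
        rw [sum_comm]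
        simp only [F, strideEquiv_apply, add_assoc]
    _ = (ℓ / n.gcd ℓ) • ∑ s : Fin (n.gcd ℓ), F (r + s) := by
        rw [hwindow, Fin.sum_univ_eq_sum_range (fun s => F (r + s))]
    _ = (ℓ / n.gcd ℓ) • ∑ x, f x := by
        congr 1
        calc ∑ s : Fin (n.gcd ℓ), F (r + s) = ∑ p, f (strideEquiv n ℓ p + r) := by
              rw [Fintype.sum_prod_type_right]
              exact sum_congr rfl fun s _ => sum_congr rfl fun j _ => by
                rw [strideEquiv_apply, add_right_comm, add_assoc]
          _ = ∑ x, f (x + r) := Equiv.sum_comp (strideEquiv n ℓ) (fun x => f (x + r))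
          _ = ∑ x, f x := Equiv.sum_comp (Equiv.addRight _) f

end Stride

theorem graded_cartan_det_selfinjective_general (n ℓ : ℕ) [NeZero n]
    (d : ZMod n → ℕ) :
    (1 - Polynomial.X ^ (∑ a, d a)) *
        (∑ i ∈ Finset.range ℓ, (shiftMatrix n d) ^ i).det =
      (1 - Polynomial.X ^ ((∑ a, d a) * ℓ / Nat.gcd n ℓ)) ^ Nat.gcd n ℓ := by
  have hshift : shiftMatrix n d = weightedShift 1 fun a => X ^ d a := rfl
  have hgeom : (1 - shiftMatrix n d).det * (∑ i ∈ range ℓ, shiftMatrix n d ^ i).det =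
      (1 - shiftMatrix n d ^ ℓ).det := by
    rw [← det_mul, mul_neg_geom_sum]
  have hdet_one : (1 - shiftMatrix n d).det = 1 - X ^ ∑ a, d a := by
    rw [hshift, det_one_sub_weightedShift_one, prod_pow_eq_pow_sum]
  have hdet_pow : (1 - shiftMatrix n d ^ ℓ).det =
      (1 - X ^ ((∑ a, d a) * (ℓ / n.gcd ℓ))) ^ n.gcd ℓ := by
    rw [hshift, weightedShift_one_pow,
      det_one_sub_weightedShift_of_equiv _ _ (strideEquiv n ℓ) (strideEquiv_add_one n ℓ)]
    simp only [prod_pow_eq_pow_sum, sum_sum_range_strideEquiv, smul_eq_mul, mul_comm,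
      prod_const, card_univ, Fintype.card_fin]
  rw [← hdet_one, hgeom, hdet_pow, Nat.mul_div_assoc _ (Nat.gcd_dvd_right n ℓ)]

/-- the graded Cartan determinant of a selfinjective Nakayama
algebra: `(1 - t^d̄) · det C = (1 - t^{d̄·ℓ/gcd(n,ℓ)})^{gcd(n,ℓ)}`. -/
theorem graded_cartan_det_selfinjective (n ℓ : ℕ) [NeZero n] (hℓ : 1 ≤ ℓ)
    (d : ZMod n → ℕ) :
    (1 - Polynomial.X ^ (∑ a, d a)) *
        (∑ i ∈ Finset.range ℓ, (shiftMatrix n d) ^ i).det =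
      (1 - Polynomial.X ^ ((∑ a, d a) * ℓ / Nat.gcd n ℓ)) ^ Nat.gcd n ℓ :=
  graded_cartan_det_selfinjective_general n ℓ d
end

section
/- Let p : ZMod n → ℕ be an admissible sequence, and define the graded (length-graded) Cartan matrix C(t) over ℚ(t) by C(t)(a,b) = Σ { t^i : 0 ≤ i < p(a), a + i = b in ZMod n }. Let c be the number of cycles of γ(a) = a + p(a) and w the common weight of its cycles. Then (1 − t^n) · det C(t) = (1 − t^{n·w})^c. -/
open Function Matrix Polynomial

/-- The length-graded Cartan matrix of the Nakayama algebra with admissible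
sequence `p`: the `(a,b)` entry is `Σ { t^i : 0 ≤ i < p a, a + i = b }`. -/
noncomputable def gradedCartanMatrix (n : ℕ) (p : ZMod n → ℕ) :
    Matrix (ZMod n) (ZMod n) (Polynomial ℚ) :=
  fun a b => ∑ i ∈ (Finset.range (p a)).filter (fun i : ℕ => (a + (i : ZMod n) = b)),
    Polynomial.X ^ i

lemma det_cyclic {m : ℕ} (x : Fin (m+1) → Polynomial ℚ) :
    (1 - Matrix.of (fun i j : Fin (m+1) => if j = i + 1 then x i else 0)).det
      = 1 - ∏ i, x i := by
  induction m with
  | zero =>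
      rw [Matrix.det_fin_one]
      simp [Matrix.one_apply, Fin.prod_univ_one]
  | succ m _ =>
      set N : Matrix (Fin (m+2)) (Fin (m+2)) (Polynomial ℚ) :=
        1 - Matrix.of (fun i j : Fin (m+2) => if j = i + 1 then x i else 0) with hN
      have hNe : ∀ i j, N i j = (if i = j then 1 else 0) - (if j = i + 1 then x i else 0) := by
        intro i j
        simp [hN, Matrix.one_apply, Matrix.sub_apply]
      -- minor at (0,0) is upper triangular with unit diagonal
      have h0 : (N.submatrix (Fin.succAbove 0) Fin.succ).det = 1 := by
        have ht : (N.submatrix (Fin.succAbove 0) Fin.succ).BlockTriangular id := by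
          intro i j hij
          simp only [Matrix.submatrix_apply, Fin.succAbove_zero, hNe]
          rw [if_neg, if_neg, sub_zero]
          · intro h
            rcases eq_or_ne i.succ (Fin.last (m+1)) with hl | hl
            · rw [hl, Fin.last_add_one] at h
              exact (Fin.succ_ne_zero j) h
            · have : (i.succ + 1 : Fin (m+2)).val = i.val + 2 := by
                have : i.succ.val + 1 < m + 2 := by
                  have := Fin.val_lt_last hl
                  omega
                rw [Fin.val_add_one_of_lt]
                · simp
                · exact Fin.lt_last_iff_ne_last.mpr hl
              have hv := congrArg Fin.val h
              rw [Fin.val_succ, this] at hv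
              have hji : j.val < i.val := hij
              omega
          · intro h
            have := Fin.succ_injective _ h
            exact absurd this.symm (ne_of_lt hij)
        rw [Matrix.det_of_upperTriangular ht]
        apply Finset.prod_eq_one
        intro i _
        simp only [Matrix.submatrix_apply, Fin.succAbove_zero, hNe]
        rw [if_pos trivial, if_neg, sub_zero]
        intro h
        have h2 : (i.succ : Fin (m+2)) + 0 = i.succ + 1 := by simpa using h
        have := add_left_cancel h2
        have := congrArg Fin.val this
        simp at this
      have hlast : (N.submatrix (Fin.succAbove (Fin.last (m+1))) Fin.succ).det
          = ∏ i : Fin (m+1), (- x i.castSucc) := by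
        have ht : (N.submatrix (Fin.succAbove (Fin.last (m+1))) Fin.succ).BlockTriangular
            OrderDual.toDual := by
          intro i j hij
          have hij' : i < j := hij
          simp only [Matrix.submatrix_apply, Fin.succAbove_last, hNe]
          rw [if_neg, if_neg, sub_zero]
          · intro h
            have hv := congrArg Fin.val h
            rw [Fin.val_succ, Fin.val_add_one_of_lt (Fin.castSucc_lt_last i),
              Fin.coe_castSucc] at hv
            have : i.val < j.val := hij'
            omega
          · intro h
            have hv := congrArg Fin.val h
            rw [Fin.coe_castSucc, Fin.val_succ] at hv
            have : i.val < j.val := hij'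
            omega
        rw [Matrix.det_of_lowerTriangular _ ht]
        apply Finset.prod_congr rfl
        intro i _
        simp only [Matrix.submatrix_apply, Fin.succAbove_last, hNe]
        rw [if_neg, if_pos, zero_sub]
        · rw [← Fin.coeSucc_eq_succ]
        · intro h
          have hv := congrArg Fin.val h
          rw [Fin.coe_castSucc, Fin.val_succ] at hv
          omega
      rw [Matrix.det_succ_column_zero]
      have key : ∀ i : Fin (m+2), (-1 : Polynomial ℚ)^(i:ℕ) * N i 0
            * (N.submatrix i.succAbove Fin.succ).det
          = (if i = 0 then 1 else 0) + (if i = Fin.last (m+1) then -(∏ j, x j) else 0) := by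
        intro i
        rcases eq_or_ne i 0 with rfl | hi0
        · have hlast0 : (0 : Fin (m+2)) ≠ Fin.last (m+1) := by
            intro h; have := congrArg Fin.val h; simp at this
          rw [if_pos rfl, if_neg hlast0, h0, hNe]
          have : ((0 : Fin (m+2)) = 0 + 1) = False := by
            simp only [eq_iff_iff, iff_false]
            intro h; have := congrArg Fin.val h; simp at this
          simp [this]
        rcases eq_or_ne i (Fin.last (m+1)) with rfl | hil
        · rw [if_neg hi0, if_pos rfl, hlast]
          have hN0 : N (Fin.last (m+1)) 0 = - x (Fin.last (m+1)) := by
            rw [hNe, if_neg hi0, if_pos (Fin.last_add_one _).symm, zero_sub]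
          rw [hN0]
          have hprodneg : (∏ i : Fin (m+1), - x i.castSucc)
              = (-1 : Polynomial ℚ)^(m+1) * ∏ i : Fin (m+1), x i.castSucc := by
            calc ∏ i : Fin (m+1), - x i.castSucc
                = ∏ i : Fin (m+1), (-1) * x i.castSucc := by simp [neg_one_mul]
              _ = (-1 : Polynomial ℚ)^(m+1) * ∏ i : Fin (m+1), x i.castSucc := by
                  rw [Finset.prod_mul_distrib, Finset.prod_const]
                  simp
          have hall : (∏ j : Fin (m+2), x j)
              = (∏ i : Fin (m+1), x i.castSucc) * x (Fin.last (m+1)) :=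
            Fin.prod_univ_castSucc x
          rw [hprodneg, hall]
          have hv : ((Fin.last (m+1) : Fin (m+2)) : ℕ) = m + 1 := rfl
          rw [hv]
          have hsq : ((-1 : Polynomial ℚ))^(m*2) = 1 := by
            rw [show m*2 = 2*m from mul_comm m 2, pow_mul]; norm_num
          linear_combination (-(x (Fin.last (m+1)) * ∏ i : Fin (m+1), x i.castSucc)) * hsq
        · rw [if_neg hi0, if_neg hil]
          have hN0 : N i 0 = 0 := by
            rw [hNe, if_neg hi0, if_neg, sub_zero]
            intro h
            have hlt : i < Fin.last (m+1) := Fin.lt_last_iff_ne_last.mpr hil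
            have hv := congrArg Fin.val h.symm
            rw [Fin.val_add_one_of_lt hlt] at hv
            simp at hv
          rw [hN0]; ring
      rw [Finset.sum_congr rfl (fun i _ => key i), Finset.sum_add_distrib,
        Finset.sum_ite_eq' Finset.univ (0 : Fin (m+2)),
        Finset.sum_ite_eq' Finset.univ (Fin.last (m+1))]
      simp only [Finset.mem_univ, if_true]
      ring

section FunMat

variable {α : Type*} [Fintype α] [DecidableEq α]

noncomputable def funMat (f : α → α) (q : α → ℕ) : Matrix α α (Polynomial ℚ) :=
  Matrix.of fun a b => if f a = b then X ^ q a else 0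

noncomputable def cyclesFinset (f : α → α) : Finset (Finset α) :=
  letI := Classical.decPred (IsGammaCycle f)
  Finset.univ.filter (IsGammaCycle f)

lemma mem_cyclesFinset {f : α → α} {I : Finset α} :
    I ∈ cyclesFinset f ↔ IsGammaCycle f I := by
  classical
  simp [cyclesFinset]

noncomputable def orb (f : α → α) (a : α) : Finset α :=
  Finset.image (fun k => f^[k] a) (Finset.range (Function.minimalPeriod f a))

lemma isGammaCycle_iff {f : α → α} {I : Finset α} :
    IsGammaCycle f I ↔ ∃ a ∈ Function.periodicPts f, I = orb f a := Iff.rfl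

lemma iterate_mem_periodicPts {f : α → α} {a : α} (ha : a ∈ Function.periodicPts f) (k : ℕ) :
    f^[k] a ∈ Function.periodicPts f := by
  induction k with
  | zero => exact ha
  | succ k ih =>
      rw [Function.iterate_succ_apply']
      obtain ⟨n, hn, hp⟩ := Function.mem_periodicPts.mp ih
      exact Function.mk_mem_periodicPts hn hp.apply

lemma mem_orb_iff {f : α → α} {a x : α} (ha : a ∈ Function.periodicPts f) :
    x ∈ orb f a ↔ ∃ k, f^[k] a = x := by
  constructor
  · rintro hx
    obtain ⟨k, _, rfl⟩ := Finset.mem_image.mp hx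
    exact ⟨k, rfl⟩
  · rintro ⟨k, rfl⟩
    refine Finset.mem_image.mpr ⟨k % Function.minimalPeriod f a, Finset.mem_range.mpr ?_, ?_⟩
    · exact Nat.mod_lt _ (Function.minimalPeriod_pos_of_mem_periodicPts ha)
    · exact Function.iterate_mod_minimalPeriod_eq

lemma mem_orb_self {f : α → α} {a : α} (ha : a ∈ Function.periodicPts f) : a ∈ orb f a :=
  (mem_orb_iff ha).mpr ⟨0, rfl⟩

lemma orb_iterate {f : α → α} {a : α} (ha : a ∈ Function.periodicPts f) (k0 : ℕ) :
    orb f (f^[k0] a) = orb f a := by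
  have hper := iterate_mem_periodicPts ha k0
  have hT := Function.minimalPeriod_pos_of_mem_periodicPts ha
  ext x
  rw [mem_orb_iff hper, mem_orb_iff ha]
  constructor
  · rintro ⟨k, rfl⟩
    exact ⟨k + k0, Function.iterate_add_apply f k k0 a⟩
  · rintro ⟨k, rfl⟩
    set T := Function.minimalPeriod f a with hTdef
    refine ⟨k + (T * (k0 + 1) - k0), ?_⟩
    have h1 : k + (T * (k0 + 1) - k0) + k0 = k + T * (k0 + 1) := by
      have : k0 ≤ T * (k0 + 1) := by nlinarith
      omega
    have h2 : f^[T * (k0+1)] a = a := by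
      have := (Function.isPeriodicPt_minimalPeriod f a).mul_const (k0+1)
      exact this
    calc f^[k + (T * (k0 + 1) - k0)] (f^[k0] a)
        = f^[k + (T * (k0 + 1) - k0) + k0] a := (Function.iterate_add_apply _ _ _ _).symm
      _ = f^[k + T * (k0+1)] a := by rw [h1]
      _ = f^[k] (f^[T * (k0+1)] a) := Function.iterate_add_apply _ _ _ _
      _ = f^[k] a := by rw [h2]

lemma orb_mem_periodic {f : α → α} {a x : α} (ha : a ∈ Function.periodicPts f)
    (hx : x ∈ orb f a) : x ∈ Function.periodicPts f := by
  obtain ⟨k, rfl⟩ := (mem_orb_iff ha).mp hx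
  exact iterate_mem_periodicPts ha k

lemma orb_eq_of_mem {f : α → α} {a x : α} (ha : a ∈ Function.periodicPts f)
    (hx : x ∈ orb f a) : orb f x = orb f a := by
  obtain ⟨k, rfl⟩ := (mem_orb_iff ha).mp hx
  exact orb_iterate ha k


lemma det_orb_block (f : α → α) (q : α → ℕ) (a : α) (ha : a ∈ Function.periodicPts f)
    (b : α → ℤ) (k : ℤ) (hP : ∀ x, b x = k ↔ x ∈ orb f a) :
    ((1 - funMat f q).toSquareBlock b k).det = 1 - X ^ (∑ x ∈ orb f a, q x) := by
  classical
  have hT : 0 < Function.minimalPeriod f a :=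
    Function.minimalPeriod_pos_of_mem_periodicPts ha
  obtain ⟨m, hm⟩ : ∃ m, Function.minimalPeriod f a = m + 1 :=
    ⟨Function.minimalPeriod f a - 1, by omega⟩
  have hinj : ∀ i j : ℕ, i < m + 1 → j < m + 1 → f^[i] a = f^[j] a → i = j := by
    intro i j hi hj h
    exact Function.iterate_injOn_Iio_minimalPeriod
      (show i ∈ Set.Iio _ by simp only [Set.mem_Iio, hm]; omega)
      (show j ∈ Set.Iio _ by simp only [Set.mem_Iio, hm]; omega) h
  have hmem : ∀ i : Fin (m+1), b (f^[i.val] a) = k := by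
    intro i
    exact (hP _).mpr ((mem_orb_iff ha).mpr ⟨i.val, rfl⟩)
  let e : Fin (m+1) ≃ {x // b x = k} := Equiv.ofBijective
    (fun i => ⟨f^[i.val] a, hmem i⟩) (by
      constructor
      · intro i j h
        exact Fin.ext (hinj i.val j.val i.isLt j.isLt (congrArg Subtype.val h))
      · rintro ⟨x, hx⟩
        obtain ⟨i, hi, rfl⟩ := Finset.mem_image.mp ((hP x).mp hx)
        exact ⟨⟨i, by rw [← hm]; exact Finset.mem_range.mp hi⟩, rfl⟩)
  rw [← Matrix.det_submatrix_equiv_self e]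
  have hmat : (((1 - funMat f q).toSquareBlock b k).submatrix e e)
      = 1 - Matrix.of (fun i j : Fin (m+1) =>
          if j = i + 1 then (X : Polynomial ℚ) ^ q (f^[i.val] a) else 0) := by
    ext i j : 2
    have he : ∀ i : Fin (m+1), ((e i : {x // b x = k}) : α) = f^[i.val] a := fun _ => rfl
    simp only [Matrix.submatrix_apply, Matrix.toSquareBlock_def, Matrix.sub_apply,
      Matrix.one_apply, Matrix.of_apply, funMat, he]
    have h1 : ((f^[i.val] a = f^[j.val] a) ↔ (i = j)) := by
      constructor
      · intro h; exact Fin.ext (hinj _ _ i.isLt j.isLt h)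
      · rintro rfl; rfl
    have hadd1 : ∀ i : Fin (m+1), ((i + 1 : Fin (m+1)) : ℕ) = (i.val + 1) % (m+1) := by
      intro i
      rw [Fin.add_def, Fin.val_one']
      conv_rhs => rw [Nat.add_mod, Nat.mod_eq_of_lt i.isLt]
    have h2 : (f (f^[i.val] a) = f^[j.val] a) ↔ (j = i + 1) := by
      rw [← Function.iterate_succ_apply' f i.val a]
      have hmod : f^[i.val + 1] a = f^[(i.val + 1) % (m+1)] a := by
        conv_lhs => rw [← Function.iterate_mod_minimalPeriod_eq (n := i.val + 1)]
        rw [hm]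
      rw [hmod]
      constructor
      · intro h
        have := hinj _ _ (Nat.mod_lt _ (by omega)) j.isLt h
        apply Fin.ext
        rw [hadd1]
        exact this.symm
      · rintro rfl
        congr 1
        rw [hadd1]
    rw [if_congr h1 rfl rfl, if_congr h2 rfl rfl]
  rw [hmat, det_cyclic]
  have hsum : (∑ x ∈ orb f a, q x) = ∑ i : Fin (m+1), q (f^[i.val] a) := by
    rw [orb, hm, Finset.sum_image (by
      intro i hi j hj h
      exact hinj i j (Finset.mem_range.mp hi) (Finset.mem_range.mp hj) h)]
    exact (Fin.sum_univ_eq_sum_range _ _).symm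
  rw [Finset.prod_pow_eq_pow_sum, hsum]

theorem det_one_sub_funMat (f : α → α) (q : α → ℕ) :
    (1 - funMat f q).det = ∏ I ∈ cyclesFinset f, (1 - X ^ (∑ a ∈ I, q a)) := by
  classical
  have hre : ∀ a : α, ∃ k, f^[k] a ∈ Function.periodicPts f := by
    intro a
    have key : ∀ i j : ℕ, i < j → f^[i] a = f^[j] a →
        ∃ k, f^[k] a ∈ Function.periodicPts f := by
      intro i j hij h
      refine ⟨i, Function.mk_mem_periodicPts (show 0 < j - i by omega) ?_⟩
      show f^[j-i] (f^[i] a) = f^[i] a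
      rw [← Function.iterate_add_apply, (show j - i + i = j by omega)]
      exact h.symm
    obtain ⟨i, j, hne, heq⟩ := Finite.exists_ne_map_eq_of_infinite (fun k : ℕ => f^[k] a)
    rcases lt_or_gt_of_ne hne with h | h
    · exact key i j h heq
    · exact key j i h heq.symm
  set reach : α → ℕ := fun a => Nat.find (hre a) with hreach
  have reach_spec : ∀ a, f^[reach a] a ∈ Function.periodicPts f :=
    fun a => Nat.find_spec (hre a)
  have reach_zero : ∀ a, a ∈ Function.periodicPts f ↔ reach a = 0 := by
    intro a
    constructor
    · intro h
      exact Nat.eq_zero_of_le_zero (Nat.find_min' (hre a) h)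
    · intro h
      have := reach_spec a
      rw [h] at this
      exact this
  have reach_succ : ∀ a, a ∉ Function.periodicPts f → reach a = reach (f a) + 1 := by
    intro a ha
    have h0 : reach a ≠ 0 := fun h => ha ((reach_zero a).mpr h)
    have h1 : reach a ≤ reach (f a) + 1 := by
      apply Nat.find_min'
      show f^[reach (f a) + 1] a ∈ _
      rw [Function.iterate_succ_apply]
      exact reach_spec (f a)
    have h2 : reach (f a) ≤ reach a - 1 := by
      apply Nat.find_min'
      show f^[reach a - 1] (f a) ∈ _
      rw [← Function.iterate_succ_apply, Nat.succ_eq_add_one,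
        (show reach a - 1 + 1 = reach a by omega)]
      exact reach_spec a
    omega
  set idxE := Fintype.equivFin (Finset α) with hidxE
  set b : α → ℤ := fun x => if x ∈ Function.periodicPts f
      then ((idxE (orb f x) : ℕ) : ℤ) else -(reach x : ℤ) with hb
  have b_per : ∀ x, x ∈ Function.periodicPts f → b x = ((idxE (orb f x) : ℕ) : ℤ) :=
    fun x hx => if_pos hx
  have b_nonper : ∀ x, x ∉ Function.periodicPts f → b x = -(reach x : ℤ) :=
    fun x hx => if_neg hx
  have b_neg : ∀ x, x ∉ Function.periodicPts f → b x < 0 := by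
    intro x hx
    rw [b_nonper x hx]
    have : reach x ≠ 0 := fun h => hx ((reach_zero x).mpr h)
    omega
  have b_nonneg : ∀ x, x ∈ Function.periodicPts f → 0 ≤ b x := by
    intro x hx
    rw [b_per x hx]
    positivity
  have fi_orb : ∀ i, i ∈ Function.periodicPts f → orb f (f i) = orb f i := by
    intro i hi
    have := orb_iterate hi 1
    rwa [Function.iterate_one] at this
  have hBT : (1 - funMat f q).BlockTriangular b := by
    intro i j hlt
    have hne : i ≠ j := by rintro rfl; exact lt_irrefl _ hlt
    have hfij : f i ≠ j := by
      intro hf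
      by_cases hip : i ∈ Function.periodicPts f
      · have hjp : j ∈ Function.periodicPts f := by
          rw [← hf]
          have := iterate_mem_periodicPts hip 1
          rwa [Function.iterate_one] at this
        have horb : orb f j = orb f i := by rw [← hf]; exact fi_orb i hip
        rw [b_per i hip, b_per j hjp, horb] at hlt
        exact lt_irrefl _ hlt
      · by_cases hjp : j ∈ Function.periodicPts f
        · have := b_neg i hip
          have := b_nonneg j hjp
          omega
        · have hr : reach i = reach j + 1 := by rw [reach_succ i hip, hf]
          rw [b_nonper i hip, b_nonper j hjp, hr] at hlt
          push_cast at hlt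
          omega
    simp [funMat, Matrix.sub_apply, Matrix.one_apply, Matrix.of_apply, hne, hfij]
  rw [hBT.det]
  have hblock1 : ∀ k : ℤ, k < 0 → ((1 - funMat f q).toSquareBlock b k) = 1 := by
    intro k hk
    have hnp : ∀ x : α, b x = k → x ∉ Function.periodicPts f := by
      intro x hx hper
      have := b_nonneg x hper
      omega
    ext ⟨i, hi⟩ ⟨j, hj⟩ : 2
    have hip := hnp i hi
    have hjp := hnp j hj
    rw [Matrix.toSquareBlock_def]
    by_cases hij : i = j
    · subst hij
      have hfix : f i ≠ i := by
        intro h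
        exact hip (Function.mk_mem_periodicPts one_pos
          (show f^[1] i = i by rwa [Function.iterate_one]))
      simp [Matrix.sub_apply, Matrix.one_apply, funMat, hfix]
    · have hsub : (⟨i, hi⟩ : {x // b x = k}) ≠ ⟨j, hj⟩ := by
        simp [Subtype.ext_iff, hij]
      have hfij : f i ≠ j := by
        intro hf
        have hr : reach i = reach j + 1 := by rw [reach_succ i hip, hf]
        rw [b_nonper i hip] at hi
        rw [b_nonper j hjp] at hj
        omega
      simp [Matrix.sub_apply, Matrix.one_apply, funMat, hij, hfij, hsub]
  rw [← Finset.prod_filter_of_ne (p := fun k => 0 ≤ k) (by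
    intro k hk hne
    by_contra h
    push_neg at h
    exact hne (by rw [hblock1 k h, Matrix.det_one]))]
  symm
  apply Finset.prod_bij (fun I _ => ((idxE I : ℕ) : ℤ))
  · intro I hI
    obtain ⟨a, ha, rfl⟩ := isGammaCycle_iff.mp (mem_cyclesFinset.mp hI)
    rw [Finset.mem_filter]
    constructor
    · apply Finset.mem_image.mpr
      exact ⟨a, Finset.mem_univ a, b_per a ha⟩
    · positivity
  · intro I hI J hJ h
    have : (idxE I : ℕ) = idxE J := by exact_mod_cast h
    exact idxE.injective (Fin.ext this)
  · intro k hk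
    rw [Finset.mem_filter] at hk
    obtain ⟨hk1, hk2⟩ := hk
    obtain ⟨a, _, hba⟩ := Finset.mem_image.mp hk1
    have hap : a ∈ Function.periodicPts f := by
      by_contra hnp
      have := b_neg a hnp
      omega
    refine ⟨orb f a, mem_cyclesFinset.mpr (isGammaCycle_iff.mpr ⟨a, hap, rfl⟩), ?_⟩
    rw [← hba, b_per a hap]
  · intro I hI
    obtain ⟨a, ha, rfl⟩ := isGammaCycle_iff.mp (mem_cyclesFinset.mp hI)
    refine (det_orb_block f q a ha b _ ?_).symm
    intro x
    constructor
    · intro hx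
      by_cases hxp : x ∈ Function.periodicPts f
      · rw [b_per x hxp] at hx
        have : orb f x = orb f a := idxE.injective (Fin.ext (by exact_mod_cast hx))
        rw [← this]
        exact mem_orb_self hxp
      · have := b_neg x hxp
        have : (0:ℤ) ≤ ((idxE (orb f a) : ℕ) : ℤ) := by positivity
        omega
    · intro hx
      rw [b_per x (orb_mem_periodic ha hx), orb_eq_of_mem ha hx]

end FunMat

section Shift

variable (n : ℕ) [NeZero n]

lemma shift_iterate (a : ZMod n) (k : ℕ) : (fun x : ZMod n => x + 1)^[k] a = a + k := by
  induction k with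
  | zero => simp
  | succ k ih => rw [Function.iterate_succ_apply', ih]; push_cast; ring

lemma shift_periodic (a : ZMod n) : a ∈ Function.periodicPts (fun x : ZMod n => x + 1) := by
  apply Function.mk_mem_periodicPts (Nat.pos_of_ne_zero (NeZero.ne n))
  show (fun x : ZMod n => x + 1)^[n] a = a
  rw [shift_iterate, ZMod.natCast_self, add_zero]

lemma shift_minimalPeriod (a : ZMod n) :
    Function.minimalPeriod (fun x : ZMod n => x + 1) a = n := by
  have hpos : 0 < n := Nat.pos_of_ne_zero (NeZero.ne n)
  have h1 : Function.IsPeriodicPt (fun x : ZMod n => x + 1) n a := by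
    show (fun x : ZMod n => x + 1)^[n] a = a
    rw [shift_iterate, ZMod.natCast_self, add_zero]
  have hdvd := h1.minimalPeriod_dvd
  set T := Function.minimalPeriod (fun x : ZMod n => x + 1) a with hT
  have hTpos : 0 < T := Function.minimalPeriod_pos_of_mem_periodicPts (shift_periodic n a)
  have h2 : (fun x : ZMod n => x + 1)^[T] a = a := Function.iterate_minimalPeriod
  rw [shift_iterate] at h2
  have h3 : (T : ZMod n) = 0 := by
    have := congrArg (fun x => x - a) h2
    simpa using this
  have h4 : n ∣ T := (ZMod.natCast_eq_zero_iff T n).mp h3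
  exact Nat.dvd_antisymm hdvd h4

lemma shift_orb (a : ZMod n) : orb (fun x : ZMod n => x + 1) a = Finset.univ := by
  apply Finset.eq_univ_of_forall
  intro x
  rw [mem_orb_iff (shift_periodic n a)]
  refine ⟨(x - a).val, ?_⟩
  rw [shift_iterate]
  rw [ZMod.natCast_rightInverse (x - a)]
  ring

lemma shift_cycles : cyclesFinset (fun x : ZMod n => x + 1) = {Finset.univ} := by
  ext I
  rw [mem_cyclesFinset, isGammaCycle_iff, Finset.mem_singleton]
  constructor
  · rintro ⟨a, ha, rfl⟩
    exact shift_orb n a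
  · rintro rfl
    exact ⟨0, shift_periodic n 0, (shift_orb n 0).symm⟩

lemma det_shift : (1 - funMat (fun x : ZMod n => x + 1) (fun _ => 1)).det
    = 1 - X ^ n := by
  rw [det_one_sub_funMat, shift_cycles, Finset.prod_singleton]
  congr 1
  congr 1
  rw [Finset.sum_const, smul_eq_mul, mul_one, Finset.card_univ, ZMod.card]

end Shift

/-- `(1 - t^n) · det C(t) = (1 - t^{n·w})^c` for the length-graded
Cartan matrix of a Nakayama algebra, where `c` is the number of cycles and `w`
the common weight. -/
theorem graded_cartan_det (n : ℕ) [NeZero n] (p : ZMod n → ℕ)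
    (hp1 : ∀ a, 1 ≤ p a) (hp2 : ∀ a, p a ≤ p (a + 1) + 1)
    (w c : ℕ)
    (hw : ∀ I : Finset (ZMod n),
      IsGammaCycle (fun a => a + (p a : ZMod n)) I → ∑ a ∈ I, p a = n * w)
    (hc : Nat.card {I : Finset (ZMod n) //
        IsGammaCycle (fun a => a + (p a : ZMod n)) I} = c) :
    (1 - Polynomial.X ^ n) * (gradedCartanMatrix n p).det =
      (1 - Polynomial.X ^ (n * w)) ^ c := by
  classical
  set γ : ZMod n → ZMod n := fun a => a + (p a : ZMod n) with hγ
  have key : gradedCartanMatrix n p * (1 - funMat (fun x : ZMod n => x + 1) (fun _ => 1))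
      = 1 - funMat γ p := by
    ext a b : 2
    rw [Matrix.mul_sub, Matrix.mul_one, Matrix.sub_apply, Matrix.sub_apply,
      Matrix.one_apply]
    have hCM : (gradedCartanMatrix n p * funMat (fun x : ZMod n => x + 1) (fun _ => 1)) a b
        = gradedCartanMatrix n p a (b - 1) * X := by
      rw [Matrix.mul_apply]
      rw [Finset.sum_eq_single (b - 1)]
      · simp [funMat, sub_add_cancel, pow_one]
      · intro x _ hx
        have : x + 1 ≠ b := by
          intro h
          exact hx (by rw [← h]; ring)
        simp [funMat, this]
      · simp
    rw [hCM]
    have hg : ∀ j : ℕ, (if a + (j : ZMod n) = b then (X : Polynomial ℚ)^j else 0)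
        = (fun j : ℕ => if a + (j : ZMod n) = b then (X : Polynomial ℚ)^j else 0) j :=
      fun _ => rfl
    set g : ℕ → Polynomial ℚ := fun j => if a + (j : ZMod n) = b then (X : Polynomial ℚ)^j else 0
      with hgdef
    have hC1 : gradedCartanMatrix n p a b = ∑ j ∈ Finset.Ico 0 (p a), g j := by
      rw [gradedCartanMatrix, Finset.sum_filter, ← Finset.range_eq_Ico]
    have hC2 : gradedCartanMatrix n p a (b - 1) * X = ∑ j ∈ Finset.Ico 1 (p a + 1), g j := by
      rw [gradedCartanMatrix, Finset.sum_filter, Finset.sum_mul, Finset.sum_Ico_eq_sum_range]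
      simp only [Nat.add_sub_cancel]
      apply Finset.sum_congr rfl
      intro i _
      have hcond : (a + (i : ZMod n) = b - 1) ↔ (a + ((1 + i : ℕ) : ZMod n) = b) := by
        rw [eq_sub_iff_add_eq]
        push_cast
        constructor
        · intro h; rw [← h]; ring
        · intro h; rw [← h]; ring
      rw [hgdef]
      simp only
      rw [if_congr hcond rfl rfl]
      split
      · rw [pow_add, pow_one]; ring
      · rw [zero_mul]
    rw [hC1, hC2]
    have hsplit1 : ∑ j ∈ Finset.Ico 0 (p a), g j = g 0 + ∑ j ∈ Finset.Ico 1 (p a), g j :=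
      Finset.sum_eq_sum_Ico_succ_bot (hp1 a) g
    have hsplit2 : ∑ j ∈ Finset.Ico 1 (p a + 1), g j
        = ∑ j ∈ Finset.Ico 1 (p a), g j + g (p a) :=
      Finset.sum_Ico_succ_top (hp1 a) g
    rw [hsplit1, hsplit2]
    have hg0 : g 0 = if a = b then 1 else 0 := by
      rw [hgdef]; simp
    have hgpa : g (p a) = if γ a = b then X ^ (p a) else 0 := by
      rw [hgdef, hγ]
    rw [hg0, hgpa]
    have : funMat γ p a b = if γ a = b then X ^ (p a) else 0 := rfl
    rw [this]
    ring
  have hdet : (gradedCartanMatrix n p).det * (1 - X ^ n)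
      = (1 - funMat γ p).det := by
    rw [← det_shift n, ← Matrix.det_mul, key]
  have hcard : (cyclesFinset γ).card = c := by
    rw [← hc, Nat.card_eq_fintype_card, Fintype.card_subtype]
    congr 1
  have hfinal : (1 - funMat γ p).det = (1 - X ^ (n * w)) ^ c := by
    rw [det_one_sub_funMat]
    rw [Finset.prod_congr rfl (fun I hI => by
      rw [hw I (mem_cyclesFinset.mp hI)])]
    rw [Finset.prod_const, hcard]
  rw [mul_comm, hdet, hfinal]
end

section
/- Let α be a finite type, f : α → α a function, and a ∈ α a periodic point of f lying on a cycle of length p. Then for every r ≥ card α and for the 'component' K(a) = { x ∈ α : ∃ m, f^m(x) lies in the orbit of a }, we have Σ_{i=0}^{p−1} card { x : f^{r+i}(x) = a } = card K(a). -/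
open Function

/-- Eventual periodicity on a finite type. -/
lemma eventually_periodic_aux {α : Type*} [Fintype α] (f : α → α) (x : α) (r : ℕ)
    (hr : Fintype.card α ≤ r) : ∃ q > 0, Function.IsPeriodicPt f q (f^[r] x) := by
  classical
  have hcard : (Finset.range (Fintype.card α + 1)).card > (Finset.univ : Finset α).card := by
    simp
  obtain ⟨i, hi, j, hj, hij, heq⟩ :=
    Finset.exists_ne_map_eq_of_card_lt_of_maps_to hcard
      (fun n _ => Finset.mem_univ (f^[n] x))
  -- wlog i < j
  wlog hlt : i < j generalizing i j
  · exact this j hj i hi hij.symm heq.symm (by omega)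
  have hi' : i ≤ Fintype.card α := Nat.lt_succ_iff.mp (Finset.mem_range.mp hi)
  refine ⟨j - i, by omega, ?_⟩
  have hper : Function.IsPeriodicPt f (j - i) (f^[i] x) := by
    show f^[j - i] (f^[i] x) = f^[i] x
    rw [← Function.iterate_add_apply]
    rw [Nat.sub_add_cancel (le_of_lt hlt)]
    exact heq.symm
  have : f^[r] x = f^[r - i] (f^[i] x) := by
    rw [← Function.iterate_add_apply, Nat.sub_add_cancel (le_trans hi' hr)]
  rw [this]
  exact hper.apply_iterate _

/-- for a periodic point `a` of cycle length `p` of `f` on a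
finite type, and any `r ≥ card α`, the sum over `0 ≤ i < p` of the number of
`x` with `f^[r+i] x = a` equals the cardinality of the component of `a` in the
functional graph of `f`. -/
theorem sum_preimages_eq_component_card {α : Type*} [Fintype α] [DecidableEq α]
    (f : α → α) (a : α) (p : ℕ)
    (ha : a ∈ Function.periodicPts f) (hp : Function.minimalPeriod f a = p)
    (r : ℕ) (hr : Fintype.card α ≤ r) :
    ∑ i ∈ Finset.range p, Fintype.card {x : α // f^[r + i] x = a} =
      Nat.card {x : α | ∃ m k : ℕ, f^[m] x = f^[k] a} := by
  classical
  have hp0 : 0 < p := hp ▸ Function.minimalPeriod_pos_of_mem_periodicPts ha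
  have hpa : Function.IsPeriodicPt f p a := hp ▸ Function.isPeriodicPt_minimalPeriod f a
  -- multiples of p fix a
  have hmul : ∀ c : ℕ, f^[p * c] a = a := fun c => (hpa.mul_const c).eq
  -- main characterization
  have hmem : ∀ x : α, (∃ m k : ℕ, f^[m] x = f^[k] a) ↔
      ∃ i ∈ Finset.range p, f^[r + i] x = a := by
    intro x
    constructor
    · rintro ⟨m, k, hmk⟩
      obtain ⟨q, hq0, hq⟩ := eventually_periodic_aux f x r hr
      -- f^[r] x = f^[q*m + r] x
      have h1 : f^[q * m + r] x = f^[r] x := by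
        have := (hq.mul_const m).eq
        rwa [← Function.iterate_add_apply] at this
      have hm_le : m ≤ q * m + r := le_add_right (Nat.le_mul_of_pos_left m hq0)
      set s : ℕ := q * m + r - m + k with hs
      have h2 : f^[r] x = f^[s] a := by
        rw [← h1]
        have : q * m + r = (q * m + r - m) + m := by omega
        rw [this, Function.iterate_add_apply, hmk, ← Function.iterate_add_apply]
      refine ⟨(p - s % p) % p, Finset.mem_range.mpr (Nat.mod_lt _ hp0), ?_⟩
      rw [add_comm r, Function.iterate_add_apply, h2, ← Function.iterate_add_apply]
      have hdvd : p ∣ (p - s % p) % p + s := by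
        have hsd := Nat.div_add_mod s p
        have h3 : s % p < p := Nat.mod_lt _ hp0
        rcases Nat.eq_zero_or_pos (s % p) with h0 | h0
        · rw [h0, Nat.sub_zero, Nat.mod_self]
          exact ⟨s / p, by omega⟩
        · have hm : (p - s % p) % p = p - s % p := Nat.mod_eq_of_lt (by omega)
          rw [hm]
          exact ⟨s / p + 1, by rw [Nat.mul_add]; omega⟩
      obtain ⟨c, hc⟩ := hdvd
      rw [hc, hmul]
    · rintro ⟨i, _, hi⟩
      exact ⟨r + i, 0, by simpa using hi⟩
  -- uniqueness of i
  have huniq : ∀ i ∈ Finset.range p, ∀ j ∈ Finset.range p, ∀ x : α,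
      f^[r + i] x = a → f^[r + j] x = a → i = j := by
    intro i hi j hj x hxi hxj
    wlog hij : i ≤ j generalizing i j
    · exact (this j hj i hi hxj hxi (by omega)).symm
    by_contra hne
    have hper : Function.IsPeriodicPt f (j - i) a := by
      show f^[j - i] a = a
      calc f^[j - i] a = f^[j - i] (f^[r + i] x) := by rw [hxi]
        _ = f^[r + j] x := by
              rw [← Function.iterate_add_apply]; congr 1; omega
        _ = a := hxj
    have := hper.minimalPeriod_le (by omega)
    rw [hp] at this
    have := Finset.mem_range.mp hj
    omega
  -- rewrite both sides as Finset cards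
  have hL : ∀ i : ℕ, Fintype.card {x : α // f^[r + i] x = a} =
      (Finset.univ.filter fun x => f^[r + i] x = a).card := fun i =>
    Fintype.card_subtype _
  have hR : Nat.card {x : α | ∃ m k : ℕ, f^[m] x = f^[k] a} =
      (Finset.univ.filter fun x : α => ∃ m k : ℕ, f^[m] x = f^[k] a).card := by
    have hset : {x : α | ∃ m k : ℕ, f^[m] x = f^[k] a} =
        ↑(Finset.univ.filter fun x : α => ∃ m k : ℕ, f^[m] x = f^[k] a) := by
      ext x; simp
    rw [hset]
    exact Nat.card_eq_finsetCard _
  rw [hR]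
  simp only [hL]
  have hdisj : ∀ i ∈ Finset.range p, ∀ j ∈ Finset.range p, i ≠ j →
      Disjoint (Finset.univ.filter fun x => f^[r + i] x = a)
        (Finset.univ.filter fun x => f^[r + j] x = a) := by
    intro i hi j hj hne
    simp only [Finset.disjoint_left, Finset.mem_filter, Finset.mem_univ, true_and]
    rintro x hxi hxj
    exact hne (huniq i hi j hj x hxi hxj)
  have hsets : (Finset.univ.filter fun x : α => ∃ m k : ℕ, f^[m] x = f^[k] a) =
      (Finset.range p).biUnion (fun i => Finset.univ.filter fun x => f^[r + i] x = a) := by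
    ext x
    simp only [Finset.mem_biUnion, Finset.mem_filter, Finset.mem_univ, true_and]
    exact hmem x
  rw [hsets, Finset.card_biUnion hdisj]
end

section
/- Let p : ZMod n → ℕ be an admissible sequence and γ(a) = a + p(a). If I is a cycle of γ with weight w = (Σ_{a∈I} p(a))/n, then the vector (1/w)·ε_I, where ε_I is the characteristic (0-1) vector of I, is a weighting on the transpose of the Cartan matrix C over ℚ, i.e., Cᵀ·(ε_I/w) equals the all-ones vector. -/
open Function Matrix Finset

lemma count_mod (n : ℕ) [NeZero n] (w : ℕ) (c : ZMod n) :
    ((Finset.range (n * w)).filter (fun t : ℕ => (t : ZMod n) = c)).card = w := by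
  have hn : 0 < n := Nat.pos_of_ne_zero (NeZero.ne n)
  have hcv : c.val < n := ZMod.val_lt c
  have hcond : ∀ t : ℕ, ((t : ZMod n) = c) ↔ t % n = c.val := by
    intro t
    constructor
    · intro h
      rw [← h, ZMod.val_natCast]
    · intro h
      calc (t : ZMod n) = ((t % n : ℕ) : ZMod n) := (ZMod.natCast_mod t n).symm
        _ = ((c.val : ℕ) : ZMod n) := by rw [h]
        _ = c := by rw [ZMod.natCast_val, ZMod.cast_id]
  calc ((Finset.range (n * w)).filter (fun t : ℕ => (t : ZMod n) = c)).card
      = (Finset.range w).card := ?_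
    _ = w := Finset.card_range w
  apply Finset.card_bij' (fun t _ => t / n) (fun j _ => c.val + j * n)
  · intro t ht
    simp only [Finset.mem_filter, Finset.mem_range] at ht
    simp only [Finset.mem_range]
    have := ht.1
    exact Nat.div_lt_of_lt_mul this
  · intro j hj
    simp only [Finset.mem_range] at hj
    simp only [Finset.mem_filter, Finset.mem_range, hcond]
    constructor
    · have : (j + 1) * n ≤ w * n := Nat.mul_le_mul_right n hj
      nlinarith
    · rw [Nat.add_mul_mod_self_right, Nat.mod_eq_of_lt hcv]
  · intro t ht
    simp only [Finset.mem_filter, Finset.mem_range, hcond] at ht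
    rw [← ht.2]
    exact Nat.mod_add_div' t n
  · intro j hj
    rw [Nat.add_mul_div_right _ _ hn, Nat.div_eq_of_lt hcv, Nat.zero_add]

lemma sum_filter_card (g : ℕ → ℕ) (Q : ℕ → Prop) [DecidablePred Q] (m : ℕ) :
    ∑ k ∈ Finset.range m,
      ((Finset.range (g k)).filter (fun i => Q ((∑ j ∈ Finset.range k, g j) + i))).card
    = ((Finset.range (∑ j ∈ Finset.range m, g j)).filter Q).card := by
  induction m with
  | zero => simp
  | succ m ih =>
    rw [Finset.sum_range_succ, Finset.sum_range_succ (f := g), Finset.range_add,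
      Finset.filter_union, Finset.card_union_of_disjoint, ih]
    · congr 1
      rw [Finset.filter_map, Finset.card_map]
      rfl
    · apply Finset.disjoint_filter_filter
      simp only [Finset.disjoint_left, Finset.mem_range, Finset.mem_map,
        addLeftEmbedding_apply]
      rintro t ht ⟨i, _, rfl⟩
      omega

lemma iterate_gamma (n : ℕ) [NeZero n] (p : ZMod n → ℕ) (a : ZMod n) (k : ℕ) :
    (fun a => a + (p a : ZMod n))^[k] a =
      a + ((∑ j ∈ Finset.range k,
        p ((fun a => a + (p a : ZMod n))^[j] a) : ℕ) : ZMod n) := by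
  induction k with
  | zero => simp
  | succ k ih =>
    rw [Function.iterate_succ_apply', Finset.sum_range_succ, Nat.cast_add, ← add_assoc, ← ih]

/-- the normalized characteristic vector `ε_I / w` of a cycle `I`
is a weighting on the transpose of the Cartan matrix. -/
theorem char_vector_weighting (n : ℕ) [NeZero n] (p : ZMod n → ℕ)
    (hp1 : ∀ a, 1 ≤ p a) (hp2 : ∀ a, p a ≤ p (a + 1) + 1)
    (I : Finset (ZMod n)) (hI : IsGammaCycle (fun a => a + (p a : ZMod n)) I)
    (w : ℕ) (hw : ∑ a ∈ I, p a = n * w) :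
    ((cartanMatrix n p).map (Int.cast : ℤ → ℚ)).transpose.mulVec
        (fun a => if a ∈ I then (1 : ℚ) / w else 0) = fun _ => 1 := by
  classical
  obtain ⟨a₀, ha₀, hIeq⟩ := hI
  set f : ZMod n → ZMod n := fun a => a + (p a : ZMod n) with hf
  set m := Function.minimalPeriod f a₀ with hm
  have hinj : Set.InjOn (fun k => f^[k] a₀) (Finset.range m : Set ℕ) := by
    intro x hx y hy hxy
    exact Function.iterate_injOn_Iio_minimalPeriod
      (by simpa using hx) (by simpa using hy) hxy
  have hsum_image : ∀ q : ZMod n → ℕ,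
      ∑ a ∈ I, q a = ∑ k ∈ Finset.range m, q (f^[k] a₀) := by
    intro q
    rw [hIeq]
    exact Finset.sum_image fun x hx y hy h => hinj hx hy h
  have hSm : ∑ k ∈ Finset.range m, p (f^[k] a₀) = n * w := by
    rw [← hsum_image]; exact hw
  have hmpos : 0 < m := Function.minimalPeriod_pos_of_mem_periodicPts ha₀
  have hwpos : 0 < w := by
    rcases Nat.eq_zero_or_pos w with h | h
    · exfalso
      have := hSm
      rw [h, Nat.mul_zero] at this
      have h0 : p (f^[0] a₀) = 0 := by
        have := Finset.sum_eq_zero_iff.mp this 0 (Finset.mem_range.mpr hmpos)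
        exact this
      have := hp1 (f^[0] a₀)
      omega
    · exact h
  have hwQ : (w : ℚ) ≠ 0 := Nat.cast_ne_zero.mpr hwpos.ne'
  funext b
  -- key counting fact
  have key : ∑ a ∈ I, ((Finset.range (p a)).filter
      (fun i : ℕ => (a + (i : ZMod n) = b))).card = w := by
    rw [hsum_image]
    have hterm : ∀ k ∈ Finset.range m,
        ((Finset.range (p (f^[k] a₀))).filter
          (fun i : ℕ => (f^[k] a₀ + (i : ZMod n) = b))).card
        = ((Finset.range (p (f^[k] a₀))).filter
          (fun i : ℕ => ((((∑ j ∈ Finset.range k, p (f^[j] a₀)) + i : ℕ) : ZMod n)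
            = b - a₀))).card := by
      intro k _
      congr 1
      apply Finset.filter_congr
      intro i _
      rw [iterate_gamma n p a₀ k]
      push_cast
      constructor
      · intro h; rw [← h]; ring
      · intro h; rw [eq_sub_iff_add_eq] at h; rw [← h]; ring
    rw [Finset.sum_congr rfl hterm,
      sum_filter_card (fun k => p (f^[k] a₀))
        (fun t : ℕ => ((t : ZMod n) = b - a₀)), hSm]
    exact count_mod n w (b - a₀)
  -- now compute the matrix-vector product at b
  simp only [mulVec, transpose_apply, map_apply, dotProduct, cartanMatrix]
  have : ∀ a : ZMod n,
      ((((Finset.range (p a)).filter (fun i : ℕ => (a + (i : ZMod n) = b))).card : ℤ) : ℚ)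
        * (if a ∈ I then (1 : ℚ) / w else 0)
      = if a ∈ I then
          (((Finset.range (p a)).filter (fun i : ℕ => (a + (i : ZMod n) = b))).card : ℚ) / w
        else 0 := by
    intro a
    split <;> simp [div_eq_mul_inv]
  rw [Finset.sum_congr rfl fun a _ => this a, Finset.sum_ite_mem,
    Finset.univ_inter, ← Finset.sum_div]
  rw [← Nat.cast_sum, key]
  exact div_self hwQ
end
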